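/- arXiv:2003.09349 — 6 statements merged into one kernel-verified Lean document; each statement's English description precedes it below -/
import Mathlib

section
/- Let E be a complex Banach space, A a bounded linear operator on E, and r a real number with r > ‖A‖. Then (1/(2πi)) ∮_{|z|=r} (z·id_E − A)⁻¹ dz = id_E, where the contour integral is taken counterclockwise over the circle of radius r centered at 0 (for |z| = r > ‖A‖ the operator z·id_E − A is invertible). This expresses the completeness M(1) = 1 of the spectral distribution of a bounded operator. -/
/-!
For `‖z‖ = r > ‖A‖` the resolvent expands in the Neumann series
`(z - A)⁻¹ = ∑ z⁻¹ ^ (n + 1) • A ^ n`, dominated on the circle by the convergent series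
`r⁻¹ ^ (n + 1) * ‖A ^ n‖`, so it can be integrated term by term. Since `∮ z⁻¹ ^ (n + 1) dz`
vanishes for `n ≠ 0`, only the term `z⁻¹ • 1` survives, contributing `2πi • 1`.
-/

open Metric Complex Real

theorem circleIntegral.hasSum_integral_of_dominated_convergence {E : Type*}
    [NormedAddCommGroup E] [NormedSpace ℂ E] {f : ℕ → ℂ → E} {g : ℂ → E} {c : ℂ} {R : ℝ}
    (bound : ℕ → ℝ) (hf : ∀ n, CircleIntegrable (f n) c R)
    (h_bound : ∀ n, ∀ z ∈ sphere c |R|, ‖f n z‖ ≤ bound n) (bound_summable : Summable bound)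
    (h_lim : ∀ z ∈ sphere c |R|, HasSum (fun n ↦ f n z) (g z)) :
    HasSum (fun n ↦ ∮ z in C(c, R), f n z) (∮ z in C(c, R), g z) := by
  refine intervalIntegral.hasSum_integral_of_dominated_convergence (fun n _ ↦ |R| * bound n)
    (fun n ↦ (hf n).out.def'.aestronglyMeasurable) (fun n ↦ ?_)
    (.of_forall fun _ _ ↦ bound_summable.mul_left _) intervalIntegrable_const
    (.of_forall fun θ _ ↦ (h_lim _ (circleMap_mem_sphere' c R θ)).const_smul _)
  refine .of_forall fun θ _ ↦ ?_
  rw [norm_smul, deriv_circleMap, norm_mul, norm_circleMap_zero, norm_I, mul_one]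
  exact mul_le_mul_of_nonneg_left (h_bound n _ (circleMap_mem_sphere' c R θ)) (abs_nonneg R)

theorem circleIntegral.integral_inv_pow_succ_of_ne_zero {n : ℕ} (hn : n ≠ 0) (R : ℝ) :
    ∮ z in C(0, R), z⁻¹ ^ (n + 1) = 0 := by
  have := circleIntegral.integral_sub_zpow_of_ne (n := -(n + 1 : ℕ)) (by omega) 0 0 R
  simpa only [sub_zero, zpow_neg, zpow_natCast, inv_pow] using this

namespace spectrum

theorem hasSum_resolvent_of_norm_lt {𝕜 A : Type*} [NormedField 𝕜] [NormedRing A]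
    [NormedAlgebra 𝕜 A] [CompleteSpace A] {a : A} {z : 𝕜} (h : ‖a‖ < ‖z‖) :
    HasSum (fun n : ℕ ↦ z⁻¹ ^ (n + 1) • a ^ n) (resolvent a z) := by
  have hz : z ≠ 0 := norm_pos_iff.mp ((norm_nonneg a).trans_lt h)
  have hza : ‖z⁻¹ • a‖ < 1 := by
    rwa [norm_smul, norm_inv, inv_mul_lt_one₀ (norm_pos_iff.mpr hz)]
  have hres : resolvent a z = z⁻¹ • Ring.inverse (1 - z⁻¹ • a) := by
    have := units_smul_resolvent_self (r := Units.mk0 z hz) (a := a)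
    rw [Units.smul_def, Units.val_mk0, Units.smul_def, Units.val_inv_eq_inv_val, Units.val_mk0,
      resolvent, resolvent, map_one] at this
    rw [← this, inv_smul_smul₀ hz, resolvent]
  rw [hres]
  convert (hasSum_geom_series_inverse _ hza).const_smul z⁻¹ using 2 with n
  rw [smul_pow, smul_smul, pow_succ']

theorem circleIntegral_resolvent_of_norm_lt {A : Type*} [NormedRing A] [NormedAlgebra ℂ A]
    [CompleteSpace A] {a : A} {R : ℝ} (h : ‖a‖ < R) :
    ∮ z in C(0, R), resolvent a z = (2 * π * I) • (1 : A) := by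
  have hR : 0 < R := (norm_nonneg a).trans_lt h
  have hsphere : ∀ z ∈ sphere (0 : ℂ) |R|, ‖z‖ = R := by
    intro z hz
    rwa [mem_sphere_zero_iff_norm, abs_of_pos hR] at hz
  have hsum := circleIntegral.hasSum_integral_of_dominated_convergence
    (f := fun n z ↦ z⁻¹ ^ (n + 1) • a ^ n) (fun n ↦ R⁻¹ * ‖((R : ℂ)⁻¹ • a) ^ n‖)
    (fun n ↦ ?integrable) (fun n z hz ↦ ?bound)
    ((summable_norm_geometric_of_norm_lt_one ?small).mul_left _)
    (fun z hz ↦ hasSum_resolvent_of_norm_lt (by rwa [hsphere z hz]))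
  case integrable =>
    refine ContinuousOn.circleIntegrable hR.le (ContinuousOn.smul ?_ continuousOn_const)
    refine (continuousOn_inv₀.mono fun z hz ↦ ?_).pow _
    exact ne_of_mem_sphere hz hR.ne'
  case bound =>
    refine le_of_eq ?_
    simp only [pow_succ, inv_pow, norm_smul, Complex.norm_mul, norm_inv, norm_pow, hsphere z hz,
      smul_pow, norm_real, norm_eq_abs, abs_of_pos hR]
    ring
  case small =>
    rwa [norm_smul, norm_inv, norm_real, Real.norm_of_nonneg hR.le, inv_mul_lt_one₀ hR]
  refine (hsum.unique (hasSum_single 0 fun n hn ↦ ?_)).trans ?_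
  · rw [circleIntegral.integral_smul_const, circleIntegral.integral_inv_pow_succ_of_ne_zero hn,
      zero_smul]
  · simp only [zero_add, pow_one, pow_zero, circleIntegral.integral_smul_const]
    simpa using congr($(circleIntegral.integral_sub_center_inv 0 hR.ne') • (1 : A))

end spectrum

/-- For a bounded operator `A` on a complex Banach space `E` and `r > ‖A‖`,
the operator `z • 1 - A` is invertible for `‖z‖ = r`, and the counterclockwise contour
integral `(1/(2πi)) ∮_{|z|=r} (z•1 - A)⁻¹ dz = 1`, i.e. the spectral distribution of a
bounded operator is complete: `M(1) = 1`. -/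
theorem spectral_distribution_complete_of_bounded
    (E : Type*) [NormedAddCommGroup E] [NormedSpace ℂ E] [CompleteSpace E]
    (A : E →L[ℂ] E) (r : ℝ) (hr : ‖A‖ < r) :
    (∀ z : ℂ, ‖z‖ = r → IsUnit (z • (1 : E →L[ℂ] E) - A)) ∧
    (2 * Real.pi * Complex.I)⁻¹ •
      (∫ θ in (0:ℝ)..(2 * Real.pi),
        (Complex.I * r * Complex.exp (Complex.I * θ)) •
          Ring.inverse (((r : ℂ) * Complex.exp (Complex.I * θ)) • (1 : E →L[ℂ] E) - A)) =
      (1 : E →L[ℂ] E) := by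
  refine ⟨fun z hz ↦ ?_, ?_⟩
  · have hz : ‖A‖ * ‖(1 : E →L[ℂ] E)‖ < ‖z‖ :=
      hz ▸ (mul_le_of_le_one_right (norm_nonneg A) ContinuousLinearMap.norm_id_le).trans_lt hr
    simpa only [spectrum.mem_resolventSet_iff, Algebra.algebraMap_eq_smul_one] using
      spectrum.mem_resolventSet_of_norm_lt_mul hz
  · have hcircle : (∫ θ in (0:ℝ)..(2 * π), (I * r * exp (I * θ)) •
        Ring.inverse (((r : ℂ) * exp (I * θ)) • (1 : E →L[ℂ] E) - A)) =
        ∮ z in C(0, r), resolvent A z := by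
      simp only [circleIntegral, deriv_circleMap, circleMap_zero, resolvent,
        Algebra.algebraMap_eq_smul_one, mul_comm _ I, mul_assoc]
    rw [hcircle, spectrum.circleIntegral_resolvent_of_norm_lt hr, inv_smul_smul₀ two_pi_I_ne_zero]
end

section
/- Let B be a complex unital Banach algebra, z₀ ∈ ℂ, U an open neighborhood of z₀, n ≥ 1 an integer, b₀, …, b_{n−1} ∈ B, and R₀ : U → B holomorphic. Suppose the function R : U \ {z₀} → B defined by R(z) = Σ_{k=0}^{n−1} b_k·(z−z₀)^{−(k+1)} + R₀(z) satisfies the resolvent equation on U \ {z₀}. Then for all 0 ≤ k, l ≤ n−1: b_k·b_l = b_{k+l} if k+l ≤ n−1, and b_k·b_l = 0 if k+l > n−1. -/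
/-!
Put `w = z - z₀`, so that `R = P + ρ` near `0`, where `P w = ∑ₖ (w ^ (k + 1))⁻¹ • bₖ` is the
principal part and `ρ` is continuous at `0`. A principal part plus a function continuous at `0`
vanishes on a punctured neighbourhood only if every coefficient vanishes: multiply by `w` and let
`w → 0`, removing one pole at a time. Fixing `w'` and comparing principal parts in `w` in the
resolvent equation gives `bₖ = (w' • bₖ - bₖ₊₁) * R w'`. Comparing principal parts in `w'` of this
identity gives `bₖ * bₘ₊₁ = bₖ₊₁ * bₘ`, and its regular part gives `bₖ * b₀ = bₖ` by downward
induction on `k`. Once `b` is extended by zero beyond `n`, these relations force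
`bₖ * bₗ = bₖ₊ₗ`.
-/

/-- A function `R` from a subset `S ⊆ ℂ` into a complex algebra satisfies the resolvent
equation on `S` if `R z₁ - R z₂ = (z₂ - z₁) • (R z₁ * R z₂)` for all `z₁, z₂ ∈ S`. -/
def ResolventEq {B : Type*} [Ring B] [Algebra ℂ B] (S : Set ℂ) (R : ℂ → B) : Prop :=
  ∀ z₁ ∈ S, ∀ z₂ ∈ S, R z₁ - R z₂ = (z₂ - z₁) • (R z₁ * R z₂)

open Filter Topology Finset

noncomputable def principalPart {𝕜 E : Type*} [DivisionRing 𝕜] [AddCommMonoid E] [Module 𝕜 E]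
    (N : ℕ) (c : ℕ → E) (w : 𝕜) : E :=
  ∑ k ∈ range N, (w ^ (k + 1))⁻¹ • c k

section PrincipalPart

variable {𝕜 : Type*} [Field 𝕜]

section Module

variable {E : Type*} [AddCommGroup E] [Module 𝕜 E] (N : ℕ) (c d : ℕ → E) (w : 𝕜)

@[simp]
theorem principalPart_zero : principalPart 0 c w = 0 := by
  simp [principalPart]

theorem principalPart_succ_of_eq_zero {N : ℕ} {c : ℕ → E} (hc : c N = 0) (w : 𝕜) :
    principalPart (N + 1) c w = principalPart N c w := by
  simp [principalPart, sum_range_succ, hc]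

@[simp]
theorem principalPart_sub :
    principalPart N (fun k => c k - d k) w = principalPart N c w - principalPart N d w := by
  simp [principalPart, smul_sub, sum_sub_distrib]

@[simp]
theorem principalPart_smul (a : 𝕜) :
    principalPart N (fun k => a • c k) w = a • principalPart N c w := by
  simp [principalPart, smul_sum, smul_comm a]

theorem smul_principalPart_succ {w : 𝕜} (hw : w ≠ 0) :
    w • principalPart (N + 1) c w = c 0 + principalPart N (fun k => c (k + 1)) w := by
  rw [principalPart, principalPart, smul_sum, sum_range_succ', add_comm]
  congr 1
  · simp [hw]
  · refine sum_congr rfl fun k _ => ?_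
    rw [smul_smul, pow_succ' w (k + 1), mul_inv, ← mul_assoc, mul_inv_cancel₀ hw, one_mul]

end Module

section Algebra

variable {A : Type*} [Ring A] [Algebra 𝕜 A] (N : ℕ) (c : ℕ → A) (w : 𝕜) (a : A)

@[simp]
theorem principalPart_mul_const :
    principalPart N (fun k => c k * a) w = principalPart N c w * a := by
  simp [principalPart, sum_mul]

@[simp]
theorem principalPart_const_mul :
    principalPart N (fun k => a * c k) w = a * principalPart N c w := by
  simp [principalPart, mul_sum]

end Algebra

end PrincipalPart

section Uniqueness

variable {𝕜 E : Type*} [NontriviallyNormedField 𝕜] [NormedAddCommGroup E] [NormedSpace 𝕜 E]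

theorem eq_zero_and_eventuallyEq_zero_of_add_smul {c : E} {f : 𝕜 → E} (hf : ContinuousAt f 0)
    (h : ∀ᶠ w in 𝓝[≠] 0, c + w • f w = 0) : c = 0 ∧ f =ᶠ[𝓝[≠] 0] 0 := by
  have hcont : ContinuousAt (fun w => c + w • f w) 0 :=
    continuousAt_const.add (continuousAt_id.smul hf)
  have hlim : Tendsto (fun w => c + w • f w) (𝓝[≠] 0) (𝓝 c) := by
    simpa using hcont.tendsto.mono_left nhdsWithin_le_nhds
  have hc : c = 0 :=
    tendsto_nhds_unique hlim (tendsto_const_nhds.congr' (h.mono fun _ hw => hw.symm))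
  refine ⟨hc, ?_⟩
  filter_upwards [h, self_mem_nhdsWithin] with w hw hw0
  rw [hc, zero_add] at hw
  exact (smul_eq_zero.mp hw).resolve_left hw0

theorem coeff_eq_zero_and_eventuallyEq_zero_of_principalPart_add {N : ℕ} {c : ℕ → E}
    {f : 𝕜 → E} (hf : ContinuousAt f 0) (h : ∀ᶠ w in 𝓝[≠] 0, principalPart N c w + f w = 0) :
    (∀ k < N, c k = 0) ∧ f =ᶠ[𝓝[≠] 0] 0 := by
  induction N generalizing c f with
  | zero => exact ⟨by simp, by simpa [EventuallyEq] using h⟩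
  | succ N ih =>
    have hshift :
        ∀ᶠ w in 𝓝[≠] 0, principalPart N (fun k => c (k + 1)) w + (c 0 + w • f w) = 0 := by
      filter_upwards [h, self_mem_nhdsWithin] with w hw hw0
      rw [add_left_comm, ← add_assoc, ← smul_principalPart_succ N c hw0, ← smul_add, hw, smul_zero]
    obtain ⟨hc, hf'⟩ := ih (continuousAt_const.add (continuousAt_id.smul hf)) hshift
    obtain ⟨hc0, hf0⟩ := eq_zero_and_eventuallyEq_zero_of_add_smul hf hf'
    refine ⟨fun k hk => ?_, hf0⟩
    cases k with
    | zero => exact hc0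
    | succ k => exact hc k (by omega)

end Uniqueness

theorem apply_mul_apply_eq_apply_add {M : Type*} [MulZeroClass M] {n : ℕ} {b : ℕ → M}
    (hb : ∀ k, n ≤ k → b k = 0) (hzero : ∀ k < n, b k * b 0 = b k)
    (hsucc : ∀ k < n, ∀ m < n, b k * b (m + 1) = b (k + 1) * b m) (k l : ℕ) :
    b k * b l = b (k + l) := by
  induction l generalizing k with
  | zero =>
    rcases lt_or_ge k n with hk | hk
    · exact hzero k hk
    · simp [hb k hk]
  | succ l ih =>
    rcases lt_or_ge k n with hk | hk
    · rcases lt_or_ge l n with hl | hl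
      · rw [hsucc k hk l hl, ih, add_right_comm, ← add_assoc]
      · rw [hb (l + 1) (by omega), hb (k + (l + 1)) (by omega), mul_zero]
    · rw [hb k hk, hb (k + (l + 1)) (by omega), zero_mul]

theorem ResolventEq.comp_const_add {B : Type*} [Ring B] [Algebra ℂ B] {S : Set ℂ} {R : ℂ → B}
    (h : ResolventEq S R) (z₀ : ℂ) : ResolventEq ((z₀ + ·) ⁻¹' S) (fun w => R (z₀ + w)) := by
  intro w₁ h₁ w₂ h₂
  simpa [add_sub_add_left_eq_sub] using h _ h₁ _ h₂

section Resolvent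

variable {B : Type*} [NormedRing B] [NormedAlgebra ℂ B]

theorem ResolventEq.coeff_eq_mul {S : Set ℂ} (hS : S ∈ 𝓝[≠] 0) {n : ℕ} {b : ℕ → B}
    (hbn : b n = 0) {ρ : ℂ → B} (hρ : ContinuousAt ρ 0) {R : ℂ → B}
    (hR : ∀ w ∈ S, R w = principalPart n b w + ρ w) (hres : ResolventEq S R) {w' : ℂ}
    (hw' : w' ∈ S) (k : ℕ) (hk : k < n) :
    b k = (w' • b k - b (k + 1)) * R w' := by
  set r := R w'
  have hexp : ∀ᶠ w in 𝓝[≠] 0, principalPart n (fun k => b k - (w' • b k - b (k + 1)) * r) w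
      + (ρ w - r - (w' - w) • (ρ w * r) + b 0 * r) = 0 := by
    filter_upwards [hS, self_mem_nhdsWithin] with w hw hw0
    have hshift : w • (principalPart n b w * r)
        = b 0 * r + principalPart n (fun k => b (k + 1)) w * r := by
      rw [← smul_mul_assoc, ← principalPart_succ_of_eq_zero hbn,
        smul_principalPart_succ _ _ hw0, add_mul]
    rw [← sub_eq_zero.mpr (hres w hw w' hw'), hR w hw]
    simp only [principalPart_sub, principalPart_mul_const, principalPart_smul, sub_mul, add_mul,
      smul_mul_assoc, sub_smul, smul_add]
    linear_combination (norm := module) -hshift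
  have htail : ContinuousAt (fun w => ρ w - r - (w' - w) • (ρ w * r) + b 0 * r) 0 := by
    fun_prop
  exact sub_eq_zero.mp
    ((coeff_eq_zero_and_eventuallyEq_zero_of_principalPart_add htail hexp).1 k hk)

theorem mul_coeff_succ_eq_and_eventually_of_eq_smul_sub_mul {n : ℕ} {b : ℕ → B} (hbn : b n = 0)
    {ρ : ℂ → B} (hρ : ContinuousAt ρ 0) {R : ℂ → B}
    (hR : ∀ᶠ w in 𝓝[≠] 0, R w = principalPart n b w + ρ w) {a a' : B}
    (ha : ∀ᶠ w in 𝓝[≠] 0, a = (w • a - a') * R w) :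
    (∀ m < n, a * b (m + 1) = a' * b m) ∧
      ∀ᶠ w in 𝓝[≠] 0, a * b 0 - a + w • (a * ρ w) - a' * ρ w = 0 := by
  have hexp : ∀ᶠ w in 𝓝[≠] 0, principalPart n (fun m => a * b (m + 1) - a' * b m) w
      + (a * b 0 - a + w • (a * ρ w) - a' * ρ w) = 0 := by
    filter_upwards [hR, ha, self_mem_nhdsWithin] with w hRw haw hw0
    have hshift : w • (a * principalPart n b w)
        = a * b 0 + a * principalPart n (fun m => b (m + 1)) w := by
      rw [← mul_smul_comm, ← principalPart_succ_of_eq_zero hbn,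
        smul_principalPart_succ _ _ hw0, mul_add]
    rw [hRw] at haw
    simp only [sub_mul, mul_add, smul_mul_assoc] at haw
    simp only [principalPart_sub, principalPart_const_mul]
    linear_combination (norm := module) -haw - hshift
  have htail : ContinuousAt (fun w => a * b 0 - a + w • (a * ρ w) - a' * ρ w) 0 := by
    fun_prop
  obtain ⟨hcoeff, htail⟩ := coeff_eq_zero_and_eventuallyEq_zero_of_principalPart_add htail hexp
  exact ⟨fun m hm => sub_eq_zero.mp (hcoeff m hm), htail⟩

theorem coeff_mul_coeff_zero_eq_self {n : ℕ} {b : ℕ → B} (hbn : b n = 0) {ρ : ℂ → B}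
    (hρ : ContinuousAt ρ 0)
    (htail : ∀ k < n, ∀ᶠ w in 𝓝[≠] 0, b k * b 0 - b k + w • (b k * ρ w) - b (k + 1) * ρ w = 0) :
    ∀ k < n, b k * b 0 = b k := by
  have key : ∀ k ≤ n, (fun w => b k * ρ w) =ᶠ[𝓝[≠] 0] 0 ∧ (k < n → b k * b 0 = b k) := by
    intro k hk
    induction hk using Nat.decreasingInduction with
    | self => exact ⟨by simp only [hbn, zero_mul]; rfl, by omega⟩
    | of_succ k hk ih =>
      have h : ∀ᶠ w in 𝓝[≠] 0, (b k * b 0 - b k) + w • (b k * ρ w) = 0 := by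
        filter_upwards [htail k hk, ih.1] with w hw hw'
        simpa [hw'] using hw
      obtain ⟨h0, hρk⟩ := eq_zero_and_eventuallyEq_zero_of_add_smul (continuousAt_const.mul hρ) h
      exact ⟨hρk, fun _ => sub_eq_zero.mp h0⟩
  exact fun k hk => (key k hk.le).2 hk

theorem ResolventEq.coeff_mul_coeff {S : Set ℂ} (hS : S ∈ 𝓝[≠] 0) {n : ℕ} {b : ℕ → B}
    (hb : ∀ k, n ≤ k → b k = 0) {ρ : ℂ → B} (hρ : ContinuousAt ρ 0) {R : ℂ → B}
    (hR : ∀ w ∈ S, R w = principalPart n b w + ρ w) (hres : ResolventEq S R) (k l : ℕ) :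
    b k * b l = b (k + l) := by
  have hbn := hb n le_rfl
  have hstep : ∀ k < n, (∀ m < n, b k * b (m + 1) = b (k + 1) * b m) ∧
      ∀ᶠ w in 𝓝[≠] 0, b k * b 0 - b k + w • (b k * ρ w) - b (k + 1) * ρ w = 0 :=
    fun k hk => mul_coeff_succ_eq_and_eventually_of_eq_smul_sub_mul hbn hρ
      (eventually_of_mem hS hR)
      (eventually_of_mem hS fun _ hw => hres.coeff_eq_mul hS hbn hρ hR hw k hk)
  exact apply_mul_apply_eq_apply_add hb
    (coeff_mul_coeff_zero_eq_self hbn hρ fun k hk => (hstep k hk).2)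
    (fun k hk => (hstep k hk).1) k l

end Resolvent

theorem laurent_coeff_mul_of_resolventEq_general
    (B : Type*) [NormedRing B] [NormedAlgebra ℂ B]
    (z₀ : ℂ) (U : Set ℂ) (hU : IsOpen U) (hz₀ : z₀ ∈ U)
    (n : ℕ) (b : ℕ → B) (R₀ : ℂ → B) (hR₀ : DifferentiableOn ℂ R₀ U)
    (R : ℂ → B)
    (hR : ∀ z ∈ U \ {z₀},
      R z = (∑ k ∈ Finset.range n, ((z - z₀) ^ (k + 1))⁻¹ • b k) + R₀ z)
    (hres : ResolventEq (U \ {z₀}) R) :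
    ∀ k < n, ∀ l < n,
      (k + l ≤ n - 1 → b k * b l = b (k + l)) ∧ (n - 1 < k + l → b k * b l = 0) := by
  set c : ℕ → B := fun k => if k < n then b k else 0
  have htrans : Tendsto (z₀ + ·) (𝓝[≠] 0) (𝓝[≠] z₀) :=
    tendsto_nhdsWithin_of_tendsto_nhds_of_eventually_within _
      (((continuous_const_add z₀).tendsto' 0 z₀ (add_zero z₀)).mono_left nhdsWithin_le_nhds)
      (eventually_mem_nhdsWithin.mono fun w hw => by simpa using hw)
  have hS := htrans (sdiff_mem_nhdsWithin_compl (hU.mem_nhds hz₀) {z₀})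
  have hρ : ContinuousAt (fun w => R₀ (z₀ + w)) 0 :=
    (hR₀.continuousOn.continuousAt (hU.mem_nhds (by simpa using hz₀))).comp
      (continuous_const_add z₀).continuousAt
  have hRc : ∀ w ∈ (z₀ + ·) ⁻¹' (U \ {z₀}), R (z₀ + w) = principalPart n c w + R₀ (z₀ + w) := by
    intro w hw
    rw [hR _ hw, add_sub_cancel_left, principalPart]
    congr 1
    exact sum_congr rfl fun k hk => by simp [c, mem_range.mp hk]
  have hmul := (hres.comp_const_add z₀).coeff_mul_coeff hS (fun k hk => if_neg (by omega)) hρ hRc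
  intro k hk l hl
  have hkl := hmul k l
  simp only [if_pos hk, if_pos hl] at hkl
  exact ⟨fun h => by rw [hkl, if_pos (by omega)], fun h => by rw [hkl, if_neg (by omega)]⟩

/-- If `R(z) = Σ_{k<n} b_k (z-z₀)^{-(k+1)} + R₀(z)` (with `R₀` holomorphic
on a neighborhood `U` of `z₀`) satisfies the resolvent equation on `U \ {z₀}`, then
`b_k b_l = b_{k+l}` if `k+l ≤ n-1` and `b_k b_l = 0` if `k+l > n-1`. -/
theorem laurent_coeff_mul_of_resolventEq
    (B : Type*) [NormedRing B] [NormedAlgebra ℂ B] [CompleteSpace B]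
    (z₀ : ℂ) (U : Set ℂ) (hU : IsOpen U) (hz₀ : z₀ ∈ U)
    (n : ℕ) (hn : 1 ≤ n) (b : ℕ → B) (R₀ : ℂ → B) (hR₀ : DifferentiableOn ℂ R₀ U)
    (R : ℂ → B)
    (hR : ∀ z ∈ U \ {z₀},
      R z = (∑ k ∈ Finset.range n, ((z - z₀) ^ (k + 1))⁻¹ • b k) + R₀ z)
    (hres : ResolventEq (U \ {z₀}) R) :
    ∀ k < n, ∀ l < n,
      (k + l ≤ n - 1 → b k * b l = b (k + l)) ∧ (n - 1 < k + l → b k * b l = 0) :=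
  laurent_coeff_mul_of_resolventEq_general B z₀ U hU hz₀ n b R₀ hR₀ R hR hres
end

section
/- Let c > 1, G = (−c,−1) ∪ (1,c) ⊂ ℝ, and 𝔥 = L²(G) the Hilbert space of square-integrable complex functions on G with inner product ⟨f₁|f₂⟩ = ∫_G conj(f₁(ω))·f₂(ω) dω. Let g : ℝ → ℝ be a C^∞ function with g(y) > 0 for y ∈ (1,c), g(−y) = g(y) for all y, and g(y) = 0 for y outside (−c,−1) ∪ (1,c), and let h(y) = −g(y) for y > 1, h(y) = g(y) for y < −1, and h(y) = 0 otherwise. Let H be a bounded linear operator on 𝔥 such that for every f ∈ 𝔥, (Hf)(ω) = ω·f(ω) + (∫_G h(y)·f(y) dy)·g(ω) for almost every ω ∈ G (i.e. H = Ω + |g⟩⟨h| with Ω the multiplication operator). Then H is not normal: H·H* ≠ H*·H, where H* is the Hilbert-space adjoint of H. -/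
open MeasureTheory

local notation "⟪" x ", " y "⟫" => @inner ℂ _ _ x y

noncomputable def phiF (m : ℝ) (g : ℝ → ℝ) : ℝ → ℝ := fun y => if 1 < y then (y - m) * g y else 0

noncomputable def psiF (g : ℝ → ℝ) : ℝ → ℝ := fun y => if y < -1 then g y else 0

/-- The adjoint of `H = Ω + |g⟩⟨h|` computed on a vector `χ` with `∫ g χ = α` real. -/
lemma adjoint_formula {U : Set ℝ} (g h : ℝ → ℝ)
    (memg : MemLp (fun a => (g a : ℂ)) 2 (volume.restrict U))
    (memh : MemLp (fun a => (h a : ℂ)) 2 (volume.restrict U))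
    (H : Lp ℂ 2 (volume.restrict U) →L[ℂ] Lp ℂ 2 (volume.restrict U))
    (hH : ∀ f : Lp ℂ 2 (volume.restrict U),
      (H f : ℝ → ℂ) =ᵐ[volume.restrict U]
        fun ω => (ω : ℂ) * f ω + (∫ y in U, (h y : ℂ) * f y) * (g ω : ℂ))
    (χ : ℝ → ℂ) (hχ : MemLp χ 2 (volume.restrict U)) (α : ℝ)
    (hgχ : ∫ a in U, (g a : ℂ) * χ a = (α : ℂ))
    (hξ : MemLp (fun a : ℝ => (a : ℂ) * χ a + (α : ℂ) * (h a : ℂ)) 2 (volume.restrict U)) :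
    ContinuousLinearMap.adjoint H (hχ.toLp χ) = hξ.toLp _ := by
  apply ext_inner_left ℂ
  intro w
  rw [ContinuousLinearMap.adjoint_inner_right]
  rw [L2.inner_def, L2.inner_def]
  obtain ⟨cw, hcw⟩ : ∃ z : ℂ, ∫ y in U, (h y : ℂ) * w y = z := ⟨_, rfl⟩
  have hmul : MemLp (fun a : ℝ => (a : ℂ) * χ a) 2 (volume.restrict U) := by
    have h1 : (fun a : ℝ => (a : ℂ) * χ a)
        = (fun a : ℝ => (a : ℂ) * χ a + (α : ℂ) * (h a : ℂ)) - (fun a : ℝ => (α : ℂ) * (h a : ℂ)) := by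
      funext a; simp
    rw [h1]; exact hξ.sub (memh.const_mul _)
  have if0 : Integrable (fun a => (starRingEnd ℂ) (w a) * ((a : ℂ) * χ a)) (volume.restrict U) := by
    refine (L2.integrable_inner (𝕜 := ℂ) w (hmul.toLp _)).congr ?_
    filter_upwards [hmul.coeFn_toLp] with a ha
    rw [RCLike.inner_apply, ha]
    ring
  have ifg : Integrable (fun a => (g a : ℂ) * χ a) (volume.restrict U) := by
    refine (L2.integrable_inner (𝕜 := ℂ) (memg.toLp _) (hχ.toLp _)).congr ?_
    filter_upwards [memg.coeFn_toLp, hχ.coeFn_toLp] with a h2 h3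
    rw [RCLike.inner_apply, h2, h3, Complex.conj_ofReal]
    ring
  have ifh : Integrable (fun a => (starRingEnd ℂ) (w a) * (h a : ℂ)) (volume.restrict U) := by
    refine (L2.integrable_inner (𝕜 := ℂ) w (memh.toLp _)).congr ?_
    filter_upwards [memh.coeFn_toLp] with a ha
    rw [RCLike.inner_apply, ha]
    ring
  have hcwc : (starRingEnd ℂ) cw = ∫ a in U, (h a : ℂ) * (starRingEnd ℂ) (w a) := by
    rw [← hcw, ← integral_conj]
    exact integral_congr_ae (Filter.Eventually.of_forall fun a => by
      simp [map_mul, Complex.conj_ofReal])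
  have hL : ∫ a, ⟪(H w : ℝ → ℂ) a, (hχ.toLp χ : ℝ → ℂ) a⟫ ∂(volume.restrict U)
      = (∫ a, (starRingEnd ℂ) (w a) * ((a : ℂ) * χ a) ∂(volume.restrict U))
        + (starRingEnd ℂ) cw * (α : ℂ) := by
    have step1 : ∫ a, ⟪(H w : ℝ → ℂ) a, (hχ.toLp χ : ℝ → ℂ) a⟫ ∂(volume.restrict U)
        = ∫ a, ((starRingEnd ℂ) (w a) * ((a : ℂ) * χ a)
            + (starRingEnd ℂ) cw * ((g a : ℂ) * χ a)) ∂(volume.restrict U) := by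
      apply integral_congr_ae
      filter_upwards [hH w, hχ.coeFn_toLp] with a h1 h2
      rw [RCLike.inner_apply, h1, hcw, h2]
      simp only [map_add, map_mul, Complex.conj_ofReal]
      ring
    rw [step1, integral_add if0 (ifg.const_mul _), integral_const_mul, hgχ]
  have hR : ∫ a, ⟪(w : ℝ → ℂ) a, (hξ.toLp _ : ℝ → ℂ) a⟫ ∂(volume.restrict U)
      = (∫ a, (starRingEnd ℂ) (w a) * ((a : ℂ) * χ a) ∂(volume.restrict U))
        + (α : ℂ) * ∫ a, (starRingEnd ℂ) (w a) * (h a : ℂ) ∂(volume.restrict U) := by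
    have step1 : ∫ a, ⟪(w : ℝ → ℂ) a, (hξ.toLp _ : ℝ → ℂ) a⟫ ∂(volume.restrict U)
        = ∫ a, ((starRingEnd ℂ) (w a) * ((a : ℂ) * χ a)
            + (α : ℂ) * ((starRingEnd ℂ) (w a) * (h a : ℂ))) ∂(volume.restrict U) := by
      apply integral_congr_ae
      filter_upwards [hξ.coeFn_toLp] with a h1
      rw [RCLike.inner_apply, h1]
      ring
    rw [step1, integral_add if0 (ifh.const_mul _), integral_const_mul]
  rw [hL, hR]
  have e1 : ∫ a, (starRingEnd ℂ) (w a) * (h a : ℂ) ∂(volume.restrict U) = (starRingEnd ℂ) cw := by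
    rw [hcwc]
    exact integral_congr_ae (Filter.Eventually.of_forall fun a => mul_comm _ _)
  rw [e1]
  ring

set_option maxHeartbeats 1000000

/-- Let `G = (-c,-1) ∪ (1,c)`, `𝔥 = L²(G)`, `g` a smooth even function
positive on `(1,c)` and vanishing outside `(-c,-1) ∪ (1,c)`, and `h = -g` on `(1,∞)`,
`h = g` on `(-∞,-1)`, `h = 0` otherwise. If `H` is the bounded operator
`H = Ω + |g⟩⟨h|`, i.e. `(Hf)(ω) = ω f(ω) + (∫_G h(y) f(y) dy) g(ω)` a.e., then `H` is
not normal: `H H* ≠ H* H`. -/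
theorem perturbed_multiplication_not_normal
    (c : ℝ) (hc : 1 < c) (G : Set ℝ) (hG : G = Set.Ioo (-c) (-1) ∪ Set.Ioo 1 c)
    (g h : ℝ → ℝ)
    (hg_smooth : ContDiff ℝ (⊤ : ℕ∞) g)
    (hg_pos : ∀ y ∈ Set.Ioo (1 : ℝ) c, 0 < g y)
    (hg_even : ∀ y, g (-y) = g y)
    (hg_supp : ∀ y, y ∉ Set.Ioo (-c) (-1) ∪ Set.Ioo 1 c → g y = 0)
    (hh : ∀ y, h y = if 1 < y then -g y else if y < -1 then g y else 0)
    (H : Lp ℂ 2 (volume.restrict G) →L[ℂ] Lp ℂ 2 (volume.restrict G))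
    (hH : ∀ f : Lp ℂ 2 (volume.restrict G),
      (H f : ℝ → ℂ) =ᵐ[volume.restrict G]
        fun ω => (ω : ℂ) * f ω + (∫ y in G, (h y : ℂ) * f y) * (g ω : ℂ)) :
    H ∘L ContinuousLinearMap.adjoint H ≠ ContinuousLinearMap.adjoint H ∘L H := by
  intro heq
  subst hG
  have hc0 : (0:ℝ) < c := by linarith
  have hgc : Continuous g := hg_smooth.continuous
  have hdisj : Disjoint (Set.Ioo (-c) (-1)) (Set.Ioo (1:ℝ) c) := by
    rw [Set.disjoint_left]
    rintro x ⟨-, hx2⟩ ⟨hx3, -⟩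
    linarith
  have hsubc : Set.Ioo (-c) (-1) ∪ Set.Ioo (1:ℝ) c ⊆ Set.Ioo (-c) c := by
    rintro x (⟨h1, h2⟩ | ⟨h1, h2⟩) <;> constructor <;> linarith
  have hg1 : g 1 = 0 := hg_supp 1 (by rintro (⟨-, h2⟩ | ⟨h2, -⟩) <;> linarith)
  have hgm1 : g (-1) = 0 := hg_supp (-1) (by rintro (⟨-, h2⟩ | ⟨h2, -⟩) <;> linarith)
  have hhc : Continuous h := by
    rw [show h = fun y => if 1 < y then -g y else if y < -1 then g y else 0 from funext hh]
    have hinner : Continuous fun y : ℝ => if y < -1 then g y else 0 := by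
      apply Continuous.if ?_ hgc continuous_const
      intro a ha
      rw [show {x : ℝ | x < -1} = Set.Iio (-1) from rfl, frontier_Iio] at ha
      simp only [Set.mem_singleton_iff] at ha
      rw [ha, hgm1]
    apply Continuous.if ?_ hgc.neg hinner
    intro a ha
    rw [show {x : ℝ | 1 < x} = Set.Ioi 1 from rfl, frontier_Ioi] at ha
    simp only [Set.mem_singleton_iff] at ha
    rw [ha, hg1]
    norm_num [hg1]
  -- the scalar integrals
  set I0 := ∫ a in Set.Ioo (1:ℝ) c, (g a)^2 with hI0def
  set I1 := ∫ a in Set.Ioo (1:ℝ) c, a * (g a)^2 with hI1def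
  set I2 := ∫ a in Set.Ioo (1:ℝ) c, a^2 * (g a)^2 with hI2def
  set L0 := ∫ a in Set.Ioo (-c) (-1), (g a)^2 with hL0def
  set m := I1 / I0 with hmdef
  -- integrability of continuous functions on the pieces
  have intS1 : ∀ F : ℝ → ℝ, Continuous F → IntegrableOn F (Set.Ioo (1:ℝ) c) volume := fun F hF =>
    (hF.continuousOn.integrableOn_compact isCompact_Icc).mono_set Set.Ioo_subset_Icc_self
  have intS2 : ∀ F : ℝ → ℝ, Continuous F → IntegrableOn F (Set.Ioo (-c) (-1)) volume := fun F hF =>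
    (hF.continuousOn.integrableOn_compact isCompact_Icc).mono_set Set.Ioo_subset_Icc_self
  have splitG : ∀ F : ℝ → ℝ, Continuous F →
      ∫ a in Set.Ioo (-c) (-1) ∪ Set.Ioo (1:ℝ) c, F a
        = (∫ a in Set.Ioo (-c) (-1), F a) + ∫ a in Set.Ioo (1:ℝ) c, F a := fun F hF =>
    setIntegral_union hdisj measurableSet_Ioo (intS2 F hF) (intS1 F hF)
  have zint : ∀ (F : ℝ → ℝ) (s : Set ℝ), MeasurableSet s → (∀ y ∈ s, F y = 0) →
      ∫ y in s, F y = 0 := by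
    intro F s hs h0
    rw [setIntegral_congr_fun (g := fun _ => (0:ℝ)) hs h0]
    simp
  -- continuity of phiF and psiF
  have hφc : Continuous (phiF m g) := by
    apply Continuous.if ?_ ((continuous_id.sub continuous_const).mul hgc) continuous_const
    intro a ha
    rw [show {x : ℝ | 1 < x} = Set.Ioi 1 from rfl, frontier_Ioi] at ha
    simp only [Set.mem_singleton_iff] at ha
    rw [ha]; simp [hg1]
  have hψc : Continuous (psiF g) := by
    apply Continuous.if ?_ hgc continuous_const
    intro a ha
    rw [show {x : ℝ | x < -1} = Set.Iio (-1) from rfl, frontier_Iio] at ha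
    simp only [Set.mem_singleton_iff] at ha
    rw [ha, hgm1]
  -- positivity
  have hgposS2 : ∀ a ∈ Set.Ioo (-c) (-1), 0 < g a := by
    intro a ha
    have h1 : g a = g (-a) := by rw [← hg_even (-a), neg_neg]
    rw [h1]
    exact hg_pos (-a) ⟨by linarith [ha.2], by linarith [ha.1]⟩
  have hI0pos : 0 < I0 := by
    rw [hI0def, setIntegral_pos_iff_support_of_nonneg_ae
      (Filter.Eventually.of_forall fun a => sq_nonneg _)
      (intS1 (fun a => (g a)^2) (by fun_prop))]
    calc (0:ENNReal) < volume (Set.Ioo (1:ℝ) c) := by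
          rw [Real.volume_Ioo]; exact ENNReal.ofReal_pos.2 (by linarith)
      _ ≤ volume ((Function.support fun a => (g a)^2) ∩ Set.Ioo (1:ℝ) c) := by
          apply measure_mono
          exact fun a ha => ⟨pow_ne_zero 2 (ne_of_gt (hg_pos a ha)), ha⟩
  have hL0pos : 0 < L0 := by
    rw [hL0def, setIntegral_pos_iff_support_of_nonneg_ae
      (Filter.Eventually.of_forall fun a => sq_nonneg _)
      (intS2 (fun a => (g a)^2) (by fun_prop))]
    calc (0:ENNReal) < volume (Set.Ioo (-c) (-1:ℝ)) := by
          rw [Real.volume_Ioo]; exact ENNReal.ofReal_pos.2 (by linarith)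
      _ ≤ volume ((Function.support fun a => (g a)^2) ∩ Set.Ioo (-c) (-1:ℝ)) := by
          apply measure_mono
          exact fun a ha => ⟨pow_ne_zero 2 (ne_of_gt (hgposS2 a ha)), ha⟩
  have hmI : m * I0 = I1 := by
    rw [hmdef]; field_simp
  have ia0 : IntegrableOn (fun a : ℝ => (g a)^2) (Set.Ioo (1:ℝ) c) volume :=
    intS1 _ (by fun_prop)
  have ia1 : IntegrableOn (fun a : ℝ => a * (g a)^2) (Set.Ioo (1:ℝ) c) volume :=
    intS1 _ (by fun_prop)
  have ia2 : IntegrableOn (fun a : ℝ => a^2 * (g a)^2) (Set.Ioo (1:ℝ) c) volume :=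
    intS1 _ (by fun_prop)
  have hPpos : 0 < I2 - m * I1 := by
    have hval : ∫ a in Set.Ioo (1:ℝ) c, (a - m)^2 * (g a)^2 = I2 - m * I1 := by
      rw [setIntegral_congr_fun (g := fun a => (a^2 * (g a)^2 - 2*m * (a * (g a)^2))
            + m^2 * (g a)^2) measurableSet_Ioo (fun a _ => by ring)]
      have iasub : IntegrableOn (fun a : ℝ => a^2 * (g a)^2 - 2*m * (a * (g a)^2))
          (Set.Ioo (1:ℝ) c) volume := ia2.sub (ia1.const_mul (2*m))
      rw [integral_add iasub ((ia0.const_mul (m^2)) :), integral_sub ia2 (ia1.const_mul (2*m)),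
        integral_const_mul, integral_const_mul]
      have hsq : m^2 * I0 = m * I1 := by rw [pow_two, mul_assoc, hmI]
      rw [← hI2def, ← hI1def, ← hI0def]
      linarith
    have hpos : 0 < ∫ a in Set.Ioo (1:ℝ) c, (a - m)^2 * (g a)^2 := by
      rw [setIntegral_pos_iff_support_of_nonneg_ae
        (Filter.Eventually.of_forall fun a => mul_nonneg (sq_nonneg _) (sq_nonneg _))
        (intS1 (fun a => (a - m)^2 * (g a)^2) (by fun_prop))]
      calc (0:ENNReal) < volume (Set.Ioo (1:ℝ) c \ {m}) := by
            rw [measure_diff_null (Real.volume_singleton), Real.volume_Ioo]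
            exact ENNReal.ofReal_pos.2 (by linarith)
        _ ≤ volume ((Function.support fun a => (a - m)^2 * (g a)^2) ∩ Set.Ioo (1:ℝ) c) := by
            apply measure_mono
            rintro a ⟨ha, ham⟩
            refine ⟨mul_ne_zero (pow_ne_zero 2 (sub_ne_zero.2 ?_))
              (pow_ne_zero 2 (ne_of_gt (hg_pos a ha))), ha⟩
            simpa using ham
    linarith [hval ▸ hpos]
  -- bound for g
  obtain ⟨M, hM⟩ := (isCompact_Icc (a := -c) (b := c)).exists_bound_of_continuousOn
    hgc.continuousOn
  set M' := max M 0 with hM'def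
  have hM'0 : (0:ℝ) ≤ M' := le_max_right _ _
  have hgB : ∀ y, |g y| ≤ M' := by
    intro y
    by_cases hy : y ∈ Set.Icc (-c) c
    · exact le_trans (by simpa [Real.norm_eq_abs] using hM y hy) (le_max_left _ _)
    · rw [hg_supp y (fun hm => hy (Set.mem_Icc_of_Ioo (hsubc hm))), abs_zero]
      exact hM'0
  have hhB : ∀ y, |h y| ≤ M' := by
    intro y
    rw [hh y]
    split_ifs with h1 h2
    · rw [abs_neg]; exact hgB y
    · exact hgB y
    · rw [abs_zero]; exact hM'0
  have hφ0 : ∀ y, y ∉ Set.Ioo (-c) (-1) ∪ Set.Ioo 1 c → phiF m g y = 0 := by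
    intro y hy
    simp only [phiF]
    split_ifs with h1
    · rw [hg_supp y hy, mul_zero]
    · rfl
  have hψ0 : ∀ y, y ∉ Set.Ioo (-c) (-1) ∪ Set.Ioo 1 c → psiF g y = 0 := by
    intro y hy
    simp only [psiF]
    split_ifs with h1
    · exact hg_supp y hy
    · rfl
  have hyB : ∀ y ∈ Set.Ioo (-c) (-1) ∪ Set.Ioo (1:ℝ) c, |y| ≤ c := fun y hy =>
    abs_le.mpr ⟨le_of_lt (hsubc hy).1, le_of_lt (hsubc hy).2⟩
  have hφB : ∀ y, |phiF m g y| ≤ (c + |m|) * M' := by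
    have hcm : (0:ℝ) ≤ c + |m| := by linarith [abs_nonneg m]
    intro y
    by_cases hy : y ∈ Set.Ioo (-c) (-1) ∪ Set.Ioo (1:ℝ) c
    · simp only [phiF]
      split_ifs with h1
      · rw [abs_mul]
        refine mul_le_mul ?_ (hgB y) (abs_nonneg _) hcm
        rw [sub_eq_add_neg]
        refine le_trans (abs_add_le _ _) ?_
        rw [abs_neg]
        linarith [hyB y hy]
      · rw [abs_zero]; exact mul_nonneg hcm hM'0
    · rw [hφ0 y hy, abs_zero]; exact mul_nonneg hcm hM'0
  have hψB : ∀ y, |psiF g y| ≤ M' := by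
    intro y
    simp only [psiF]
    split_ifs with h1
    · exact hgB y
    · rw [abs_zero]; exact hM'0
  -- finite measure instance
  haveI : IsFiniteMeasure (volume.restrict (Set.Ioo (-c) (-1) ∪ Set.Ioo (1:ℝ) c)) := by
    constructor
    rw [Measure.restrict_apply_univ]
    exact lt_of_le_of_lt (measure_mono hsubc) (by rw [Real.volume_Ioo]; exact ENNReal.ofReal_lt_top)
  have memOf : ∀ (F : ℝ → ℝ) (C : ℝ), Continuous F → (∀ y, |F y| ≤ C) →
      MemLp (fun a => (F a : ℂ)) 2 (volume.restrict (Set.Ioo (-c) (-1) ∪ Set.Ioo (1:ℝ) c)) :=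
    fun F C hFc hFb =>
      MemLp.of_bound (Complex.continuous_ofReal.comp hFc).aestronglyMeasurable C
        (Filter.Eventually.of_forall fun a => by
          simpa [Complex.norm_real, Real.norm_eq_abs] using hFb a)
  have memg' := memOf g M' hgc hgB
  have memh' := memOf h M' hhc hhB
  have memφ := memOf (phiF m g) _ hφc hφB
  have memψ := memOf (psiF g) _ hψc hψB
  -- membership of the adjoint candidates
  have memξu : MemLp (fun a : ℝ => (a : ℂ) * (phiF m g a : ℂ) + (((0:ℝ)) : ℂ) * (h a : ℂ)) 2
      (volume.restrict (Set.Ioo (-c) (-1) ∪ Set.Ioo (1:ℝ) c)) := by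
    have hfu : (fun a : ℝ => (a : ℂ) * (phiF m g a : ℂ) + (((0:ℝ)) : ℂ) * (h a : ℂ))
        = fun a : ℝ => ((a * phiF m g a + 0 * h a : ℝ) : ℂ) := by
      funext a; push_cast; ring
    rw [hfu]
    refine memOf _ (c * ((c + |m|) * M')) (by fun_prop) ?_
    intro y
    rw [zero_mul, add_zero]
    by_cases hy : y ∈ Set.Ioo (-c) (-1) ∪ Set.Ioo (1:ℝ) c
    · rw [abs_mul]
      exact mul_le_mul (hyB y hy) (hφB y) (abs_nonneg _) (le_of_lt hc0)
    · rw [hφ0 y hy, mul_zero, abs_zero]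
      exact mul_nonneg (le_of_lt hc0) (mul_nonneg (by linarith [abs_nonneg m]) hM'0)
  have memξv : MemLp (fun a : ℝ => (a : ℂ) * (psiF g a : ℂ) + ((L0 : ℝ) : ℂ) * (h a : ℂ)) 2
      (volume.restrict (Set.Ioo (-c) (-1) ∪ Set.Ioo (1:ℝ) c)) := by
    have hfv : (fun a : ℝ => (a : ℂ) * (psiF g a : ℂ) + ((L0 : ℝ) : ℂ) * (h a : ℂ))
        = fun a : ℝ => ((a * psiF g a + L0 * h a : ℝ) : ℂ) := by
      funext a; push_cast; ring
    rw [hfv]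
    refine memOf _ (c * M' + |L0| * M') (by fun_prop) ?_
    intro y
    by_cases hy : y ∈ Set.Ioo (-c) (-1) ∪ Set.Ioo (1:ℝ) c
    · refine le_trans (abs_add_le _ _) ?_
      rw [abs_mul, abs_mul]
      have e1 : |y| * |psiF g y| ≤ c * M' :=
        mul_le_mul (hyB y hy) (hψB y) (abs_nonneg _) (le_of_lt hc0)
      have e2 : |L0| * |h y| ≤ |L0| * M' :=
        mul_le_mul_of_nonneg_left (hhB y) (abs_nonneg _)
      linarith
    · rw [hψ0 y hy, hh y]
      have hg0 : g y = 0 := hg_supp y hy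
      split_ifs with h1 h2 <;>
        simp [hg0] <;>
        positivity
  -- the real integral identities
  have r1 : ∫ a in Set.Ioo (-c) (-1) ∪ Set.Ioo (1:ℝ) c, h a * phiF m g a = 0 := by
    rw [splitG (fun a => h a * phiF m g a) (hhc.mul hφc)]
    have e2 : ∫ a in Set.Ioo (-c) (-1:ℝ), h a * phiF m g a = 0 :=
      zint _ _ measurableSet_Ioo (fun y hy => by
        have h1 : ¬ (1:ℝ) < y := by simp only [Set.mem_Ioo] at hy; linarith [hy.2]
        simp only [phiF, if_neg h1, mul_zero])
    have e1 : ∫ a in Set.Ioo (1:ℝ) c, h a * phiF m g a = m * I0 - I1 := by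
      rw [setIntegral_congr_fun (g := fun a => m * (g a)^2 - a * (g a)^2) measurableSet_Ioo
        (fun y hy => by
          have h1 : (1:ℝ) < y := hy.1
          rw [hh y, if_pos h1]
          simp only [phiF, if_pos h1]
          ring)]
      rw [integral_sub ((ia0.const_mul m) :) ia1, integral_const_mul, ← hI0def, ← hI1def]
    rw [e2, e1]
    linarith [hmI]
  have r2 : ∫ a in Set.Ioo (-c) (-1) ∪ Set.Ioo (1:ℝ) c, g a * phiF m g a = 0 := by
    rw [splitG (fun a => g a * phiF m g a) (hgc.mul hφc)]
    have e2 : ∫ a in Set.Ioo (-c) (-1:ℝ), g a * phiF m g a = 0 :=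
      zint _ _ measurableSet_Ioo (fun y hy => by
        have h1 : ¬ (1:ℝ) < y := by simp only [Set.mem_Ioo] at hy; linarith [hy.2]
        simp only [phiF, if_neg h1, mul_zero])
    have e1 : ∫ a in Set.Ioo (1:ℝ) c, g a * phiF m g a = I1 - m * I0 := by
      rw [setIntegral_congr_fun (g := fun a => a * (g a)^2 - m * (g a)^2) measurableSet_Ioo
        (fun y hy => by
          have h1 : (1:ℝ) < y := hy.1
          simp only [phiF, if_pos h1]
          ring)]
      rw [integral_sub ia1 ((ia0.const_mul m) :), integral_const_mul, ← hI0def, ← hI1def]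
    rw [e2, e1]
    linarith [hmI]
  have r3 : ∫ a in Set.Ioo (-c) (-1) ∪ Set.Ioo (1:ℝ) c, h a * psiF g a = L0 := by
    rw [splitG (fun a => h a * psiF g a) (hhc.mul hψc)]
    have e1 : ∫ a in Set.Ioo (1:ℝ) c, h a * psiF g a = 0 :=
      zint _ _ measurableSet_Ioo (fun y hy => by
        have h1 : ¬ y < (-1:ℝ) := by simp only [Set.mem_Ioo] at hy; linarith [hy.1]
        simp only [psiF, if_neg h1, mul_zero])
    have e2 : ∫ a in Set.Ioo (-c) (-1:ℝ), h a * psiF g a = L0 := by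
      rw [setIntegral_congr_fun (g := fun a => (g a)^2) measurableSet_Ioo
        (fun y hy => by
          simp only [Set.mem_Ioo] at hy
          have h1 : ¬ (1:ℝ) < y := by linarith [hy.2]
          have h2 : y < (-1:ℝ) := hy.2
          rw [hh y, if_neg h1, if_pos h2]
          simp only [psiF, if_pos h2]
          ring), ← hL0def]
    rw [e2, e1, add_zero]
  have r4 : ∫ a in Set.Ioo (-c) (-1) ∪ Set.Ioo (1:ℝ) c, g a * psiF g a = L0 := by
    rw [splitG (fun a => g a * psiF g a) (hgc.mul hψc)]
    have e1 : ∫ a in Set.Ioo (1:ℝ) c, g a * psiF g a = 0 :=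
      zint _ _ measurableSet_Ioo (fun y hy => by
        have h1 : ¬ y < (-1:ℝ) := by simp only [Set.mem_Ioo] at hy; linarith [hy.1]
        simp only [psiF, if_neg h1, mul_zero])
    have e2 : ∫ a in Set.Ioo (-c) (-1:ℝ), g a * psiF g a = L0 := by
      rw [setIntegral_congr_fun (g := fun a => (g a)^2) measurableSet_Ioo
        (fun y hy => by
          simp only [Set.mem_Ioo] at hy
          have h2 : y < (-1:ℝ) := hy.2
          simp only [psiF, if_pos h2]
          ring), ← hL0def]
    rw [e2, e1, add_zero]
  have r5 : ∫ a in Set.Ioo (-c) (-1) ∪ Set.Ioo (1:ℝ) c,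
      (a * phiF m g a + 0 * h a) * (a * psiF g a + L0 * h a) = -(L0 * (I2 - m * I1)) := by
    rw [splitG _ (by fun_prop)]
    have e2 : ∫ a in Set.Ioo (-c) (-1:ℝ),
        (a * phiF m g a + 0 * h a) * (a * psiF g a + L0 * h a) = 0 :=
      zint _ _ measurableSet_Ioo (fun y hy => by
        have h1 : ¬ (1:ℝ) < y := by simp only [Set.mem_Ioo] at hy; linarith [hy.2]
        simp only [phiF, if_neg h1, mul_zero, zero_mul, add_zero, zero_add])
    have e1 : ∫ a in Set.Ioo (1:ℝ) c,
        (a * phiF m g a + 0 * h a) * (a * psiF g a + L0 * h a)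
          = -L0 * I2 + (L0 * m) * I1 := by
      rw [setIntegral_congr_fun
        (g := fun a => -L0 * (a^2 * (g a)^2) + (L0 * m) * (a * (g a)^2)) measurableSet_Ioo
        (fun y hy => by
          have h1 : (1:ℝ) < y := hy.1
          have h2 : ¬ y < (-1:ℝ) := by linarith
          rw [hh y, if_pos h1]
          simp only [phiF, psiF, if_pos h1, if_neg h2]
          ring)]
      rw [integral_add ((ia2.const_mul (-L0)) :) ((ia1.const_mul (L0 * m)) :),
        integral_const_mul, integral_const_mul, ← hI2def, ← hI1def]
    rw [e2, e1, zero_add]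
    ring
  have r6 : ∫ a in Set.Ioo (-c) (-1) ∪ Set.Ioo (1:ℝ) c,
      (a * phiF m g a) * (a * psiF g a + L0 * g a) = L0 * (I2 - m * I1) := by
    rw [splitG _ (by fun_prop)]
    have e2 : ∫ a in Set.Ioo (-c) (-1:ℝ),
        (a * phiF m g a) * (a * psiF g a + L0 * g a) = 0 :=
      zint _ _ measurableSet_Ioo (fun y hy => by
        have h1 : ¬ (1:ℝ) < y := by simp only [Set.mem_Ioo] at hy; linarith [hy.2]
        simp only [phiF, if_neg h1, mul_zero, zero_mul])
    have e1 : ∫ a in Set.Ioo (1:ℝ) c,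
        (a * phiF m g a) * (a * psiF g a + L0 * g a)
          = L0 * I2 + (-(L0 * m)) * I1 := by
      rw [setIntegral_congr_fun
        (g := fun a => L0 * (a^2 * (g a)^2) + (-(L0 * m)) * (a * (g a)^2)) measurableSet_Ioo
        (fun y hy => by
          have h1 : (1:ℝ) < y := hy.1
          have h2 : ¬ y < (-1:ℝ) := by linarith
          simp only [phiF, psiF, if_pos h1, if_neg h2]
          ring)]
      rw [integral_add ((ia2.const_mul L0) :) ((ia1.const_mul (-(L0 * m))) :),
        integral_const_mul, integral_const_mul, ← hI2def, ← hI1def]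
    rw [e2, e1, zero_add]
    ring
  -- complex versions
  have c1 : ∫ y in Set.Ioo (-c) (-1) ∪ Set.Ioo (1:ℝ) c,
      (h y : ℂ) * (phiF m g y : ℂ) = 0 := by
    have e : ∫ y in Set.Ioo (-c) (-1) ∪ Set.Ioo (1:ℝ) c, (h y : ℂ) * (phiF m g y : ℂ)
        = ((∫ y in Set.Ioo (-c) (-1) ∪ Set.Ioo (1:ℝ) c, h y * phiF m g y : ℝ) : ℂ) := by
      refine (integral_congr_ae (Filter.Eventually.of_forall fun y => ?_)).trans
        (integral_ofReal (𝕜 := ℂ))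
      push_cast
      rfl
    rw [e, r1, Complex.ofReal_zero]
  have c2 : ∫ y in Set.Ioo (-c) (-1) ∪ Set.Ioo (1:ℝ) c,
      (g y : ℂ) * (phiF m g y : ℂ) = (((0:ℝ)) : ℂ) := by
    have e : ∫ y in Set.Ioo (-c) (-1) ∪ Set.Ioo (1:ℝ) c, (g y : ℂ) * (phiF m g y : ℂ)
        = ((∫ y in Set.Ioo (-c) (-1) ∪ Set.Ioo (1:ℝ) c, g y * phiF m g y : ℝ) : ℂ) := by
      refine (integral_congr_ae (Filter.Eventually.of_forall fun y => ?_)).trans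
        (integral_ofReal (𝕜 := ℂ))
      push_cast
      rfl
    rw [e, r2]
  have c3 : ∫ y in Set.Ioo (-c) (-1) ∪ Set.Ioo (1:ℝ) c,
      (h y : ℂ) * (psiF g y : ℂ) = ((L0 : ℝ) : ℂ) := by
    have e : ∫ y in Set.Ioo (-c) (-1) ∪ Set.Ioo (1:ℝ) c, (h y : ℂ) * (psiF g y : ℂ)
        = ((∫ y in Set.Ioo (-c) (-1) ∪ Set.Ioo (1:ℝ) c, h y * psiF g y : ℝ) : ℂ) := by
      refine (integral_congr_ae (Filter.Eventually.of_forall fun y => ?_)).trans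
        (integral_ofReal (𝕜 := ℂ))
      push_cast
      rfl
    rw [e, r3]
  have c4 : ∫ y in Set.Ioo (-c) (-1) ∪ Set.Ioo (1:ℝ) c,
      (g y : ℂ) * (psiF g y : ℂ) = ((L0 : ℝ) : ℂ) := by
    have e : ∫ y in Set.Ioo (-c) (-1) ∪ Set.Ioo (1:ℝ) c, (g y : ℂ) * (psiF g y : ℂ)
        = ((∫ y in Set.Ioo (-c) (-1) ∪ Set.Ioo (1:ℝ) c, g y * psiF g y : ℝ) : ℂ) := by
      refine (integral_congr_ae (Filter.Eventually.of_forall fun y => ?_)).trans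
        (integral_ofReal (𝕜 := ℂ))
      push_cast
      rfl
    rw [e, r4]
  -- the test vectors
  set u := memφ.toLp _ with hudef
  set v := memψ.toLp _ with hvdef
  have hucoe : (u : ℝ → ℂ) =ᵐ[volume.restrict (Set.Ioo (-c) (-1) ∪ Set.Ioo (1:ℝ) c)]
      fun a : ℝ => (phiF m g a : ℂ) := memφ.coeFn_toLp
  have hvcoe : (v : ℝ → ℂ) =ᵐ[volume.restrict (Set.Ioo (-c) (-1) ∪ Set.Ioo (1:ℝ) c)]
      fun a : ℝ => (psiF g a : ℂ) := memψ.coeFn_toLp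
  -- adjoint values
  have hadjU : ContinuousLinearMap.adjoint H u = memξu.toLp _ :=
    adjoint_formula g h memg' memh' H hH _ memφ 0 c2 memξu
  have hadjV : ContinuousLinearMap.adjoint H v = memξv.toLp _ :=
    adjoint_formula g h memg' memh' H hH _ memψ L0 c4 memξv
  -- action of H on u and v
  have hcu : ∫ y in Set.Ioo (-c) (-1) ∪ Set.Ioo (1:ℝ) c, (h y : ℂ) * (u : ℝ → ℂ) y = 0 := by
    have e : ∫ y in Set.Ioo (-c) (-1) ∪ Set.Ioo (1:ℝ) c, (h y : ℂ) * (u : ℝ → ℂ) y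
        = ∫ y in Set.Ioo (-c) (-1) ∪ Set.Ioo (1:ℝ) c, (h y : ℂ) * (phiF m g y : ℂ) :=
      integral_congr_ae (hucoe.mono fun a ha => by simp only [ha])
    rw [e, c1]
  have hcv : ∫ y in Set.Ioo (-c) (-1) ∪ Set.Ioo (1:ℝ) c, (h y : ℂ) * (v : ℝ → ℂ) y
      = ((L0 : ℝ) : ℂ) := by
    have e : ∫ y in Set.Ioo (-c) (-1) ∪ Set.Ioo (1:ℝ) c, (h y : ℂ) * (v : ℝ → ℂ) y
        = ∫ y in Set.Ioo (-c) (-1) ∪ Set.Ioo (1:ℝ) c, (h y : ℂ) * (psiF g y : ℂ) :=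
      integral_congr_ae (hvcoe.mono fun a ha => by simp only [ha])
    rw [e, c3]
  have hHu : (H u : ℝ → ℂ) =ᵐ[volume.restrict (Set.Ioo (-c) (-1) ∪ Set.Ioo (1:ℝ) c)]
      fun a : ℝ => (a : ℂ) * (phiF m g a : ℂ) := by
    filter_upwards [hH u, hucoe] with a h1 h2
    rw [h1, hcu, h2, zero_mul, add_zero]
  have hHv : (H v : ℝ → ℂ) =ᵐ[volume.restrict (Set.Ioo (-c) (-1) ∪ Set.Ioo (1:ℝ) c)]
      fun a : ℝ => (a : ℂ) * (psiF g a : ℂ) + ((L0 : ℝ) : ℂ) * (g a : ℂ) := by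
    filter_upwards [hH v, hvcoe] with a h1 h2
    rw [h1, hcv, h2]
  -- the key identity from normality
  have key : ⟪ContinuousLinearMap.adjoint H u, ContinuousLinearMap.adjoint H v⟫
      = ⟪H u, H v⟫ := by
    have h1 := congrArg (fun T : (Lp ℂ 2 (volume.restrict (Set.Ioo (-c) (-1) ∪ Set.Ioo (1:ℝ) c))
        →L[ℂ] Lp ℂ 2 (volume.restrict (Set.Ioo (-c) (-1) ∪ Set.Ioo (1:ℝ) c))) => ⟪u, T v⟫) heq
    simp only [ContinuousLinearMap.coe_comp', Function.comp_apply] at h1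
    exact (ContinuousLinearMap.adjoint_inner_left H (ContinuousLinearMap.adjoint H v) u).trans
      (h1.trans (ContinuousLinearMap.adjoint_inner_right H u (H v)))
  rw [hadjU, hadjV] at key
  -- evaluate both sides
  have lhsval : ⟪(memξu.toLp _ : Lp ℂ 2 (volume.restrict (Set.Ioo (-c) (-1) ∪ Set.Ioo (1:ℝ) c))),
      memξv.toLp _⟫ = ((-(L0 * (I2 - m * I1)) : ℝ) : ℂ) := by
    rw [L2.inner_def]
    have e : ∫ a in Set.Ioo (-c) (-1) ∪ Set.Ioo (1:ℝ) c,
        ⟪(memξu.toLp _ : ℝ → ℂ) a, (memξv.toLp _ : ℝ → ℂ) a⟫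
        = ∫ a in Set.Ioo (-c) (-1) ∪ Set.Ioo (1:ℝ) c,
          (((a * phiF m g a + 0 * h a) * (a * psiF g a + L0 * h a) : ℝ) : ℂ) := by
      apply integral_congr_ae
      filter_upwards [memξu.coeFn_toLp, memξv.coeFn_toLp] with a h1 h2
      rw [RCLike.inner_apply, h1, h2]
      simp only [map_add, map_mul, Complex.conj_ofReal]
      push_cast
      ring
    have e2 : (∫ a in Set.Ioo (-c) (-1) ∪ Set.Ioo (1:ℝ) c,
        (((a * phiF m g a + 0 * h a) * (a * psiF g a + L0 * h a) : ℝ) : ℂ))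
        = ((∫ a in Set.Ioo (-c) (-1) ∪ Set.Ioo (1:ℝ) c,
          (a * phiF m g a + 0 * h a) * (a * psiF g a + L0 * h a) : ℝ) : ℂ) := integral_ofReal
    rw [e, e2, r5]
  have rhsval : ⟪H u, H v⟫ = ((L0 * (I2 - m * I1) : ℝ) : ℂ) := by
    rw [L2.inner_def]
    have e : ∫ a in Set.Ioo (-c) (-1) ∪ Set.Ioo (1:ℝ) c,
        ⟪(H u : ℝ → ℂ) a, (H v : ℝ → ℂ) a⟫
        = ∫ a in Set.Ioo (-c) (-1) ∪ Set.Ioo (1:ℝ) c,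
          (((a * phiF m g a) * (a * psiF g a + L0 * g a) : ℝ) : ℂ) := by
      apply integral_congr_ae
      filter_upwards [hHu, hHv] with a h1 h2
      rw [RCLike.inner_apply, h1, h2]
      simp only [map_add, map_mul, Complex.conj_ofReal]
      push_cast
      ring
    have e2 : (∫ a in Set.Ioo (-c) (-1) ∪ Set.Ioo (1:ℝ) c,
        (((a * phiF m g a) * (a * psiF g a + L0 * g a) : ℝ) : ℂ))
        = ((∫ a in Set.Ioo (-c) (-1) ∪ Set.Ioo (1:ℝ) c,
          (a * phiF m g a) * (a * psiF g a + L0 * g a) : ℝ) : ℂ) := integral_ofReal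
    rw [e, e2, r6]
  rw [lhsval, rhsval] at key
  have hre : -(L0 * (I2 - m * I1)) = L0 * (I2 - m * I1) := by exact_mod_cast key
  nlinarith [hL0pos, hPpos]
end

section
/- Let c > 1 and let g : ℝ → ℝ be a C^∞ function with g(y) > 0 for y ∈ (1,c), g(−y) = g(y) for all y, and g(y) = 0 for y outside (−c,−1) ∪ (1,c). For z ∈ ℂ with z² ∉ [1, c²] define C(z) = 1 + ∫₁ᶜ 2y·g(y)²/(z² − y²) dy. If z ∈ ℂ satisfies Re z ≠ 0 and Im z ≠ 0, then C(z) ≠ 0; that is, every zero of C lies on the real axis or on the imaginary axis. (This follows since Im C(x+iu) = ∫₁ᶜ 4y²·x·u·g(y)²/((x²−u²−y²)² + 4x²u²) dy has the strict sign of x·u.) -/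
open MeasureTheory intervalIntegral

/-- With `g` smooth, even, positive on `(1,c)` and vanishing outside
`(-c,-1) ∪ (1,c)`, define `C(z) = 1 + ∫₁ᶜ 2y g(y)²/(z²-y²) dy`. Every zero of `C`
lies on the real or imaginary axis: if `Re z ≠ 0` and `Im z ≠ 0` then `C(z) ≠ 0`. -/
theorem zeros_of_C_on_axes
    (c : ℝ) (hc : 1 < c) (g : ℝ → ℝ)
    (hg_smooth : ContDiff ℝ (⊤ : ℕ∞) g)
    (hg_pos : ∀ y ∈ Set.Ioo (1 : ℝ) c, 0 < g y)
    (hg_even : ∀ y, g (-y) = g y)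
    (hg_supp : ∀ y, y ∉ Set.Ioo (-c) (-1) ∪ Set.Ioo 1 c → g y = 0)
    (z : ℂ) (hre : z.re ≠ 0) (him : z.im ≠ 0) :
    1 + ∫ y in (1 : ℝ)..c, ((2 * y * g y ^ 2 : ℝ) : ℂ) / (z ^ 2 - (y : ℂ) ^ 2) ≠ 0 := by
  have hden : ∀ y : ℝ, z ^ 2 - (y : ℂ) ^ 2 ≠ 0 := by
    intro y hy
    have h1 := congrArg Complex.im hy
    simp [pow_two, Complex.sub_im, Complex.mul_im] at h1
    have : z.re * z.im = 0 := by linarith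
    rcases mul_eq_zero.mp this with h | h
    · exact hre h
    · exact him h
  have hgc : Continuous g := hg_smooth.continuous
  have hcont : Continuous fun y : ℝ => ((2 * y * g y ^ 2 : ℝ) : ℂ) / (z ^ 2 - (y : ℂ) ^ 2) := by
    apply Continuous.div
    · exact Complex.continuous_ofReal.comp (by continuity)
    · fun_prop
    · exact fun y => hden y
  have hInt : IntervalIntegrable (fun y : ℝ => ((2 * y * g y ^ 2 : ℝ) : ℂ) / (z ^ 2 - (y : ℂ) ^ 2))
      volume 1 c := hcont.intervalIntegrable 1 c
  intro h
  -- Take imaginary parts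
  have hIm : (∫ y in (1:ℝ)..c, ((2 * y * g y ^ 2 : ℝ) : ℂ) / (z ^ 2 - (y : ℂ) ^ 2)).im = 0 := by
    have := congrArg Complex.im h
    simpa using this
  have hImInt : (∫ y in (1:ℝ)..c, ((2 * y * g y ^ 2 : ℝ) : ℂ) / (z ^ 2 - (y : ℂ) ^ 2)).im
      = ∫ y in (1:ℝ)..c, (((2 * y * g y ^ 2 : ℝ) : ℂ) / (z ^ 2 - (y : ℂ) ^ 2)).im := by
    exact (Complex.imCLM.intervalIntegral_comp_comm hInt).symm
  -- pointwise formula for the imaginary part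
  have hptw : ∀ y : ℝ, (((2 * y * g y ^ 2 : ℝ) : ℂ) / (z ^ 2 - (y : ℂ) ^ 2)).im
      = (-(2 * z.re * z.im)) * (2 * y * g y ^ 2 / Complex.normSq (z ^ 2 - (y : ℂ) ^ 2)) := by
    intro y
    rw [Complex.div_im]
    simp [pow_two, Complex.sub_im, Complex.mul_im]
    ring
  have hcont2 : Continuous fun y : ℝ => 2 * y * g y ^ 2 / Complex.normSq (z ^ 2 - (y : ℂ) ^ 2) := by
    apply Continuous.div
    · exact ((continuous_const.mul continuous_id).mul (hgc.pow 2))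
    · exact Complex.continuous_normSq.comp (by fun_prop)
    · intro y
      exact Complex.normSq_pos.mpr (hden y) |>.ne'
  have hpos : 0 < ∫ y in (1:ℝ)..c, 2 * y * g y ^ 2 / Complex.normSq (z ^ 2 - (y : ℂ) ^ 2) := by
    apply intervalIntegral_pos_of_pos_on (hcont2.intervalIntegrable 1 c) _ hc
    intro y hy
    have h1 : (0:ℝ) < 2 * y := by linarith [hy.1]
    have h2 : 0 < g y ^ 2 := pow_pos (hg_pos y hy) 2
    have h3 : 0 < Complex.normSq (z ^ 2 - (y : ℂ) ^ 2) := Complex.normSq_pos.mpr (hden y)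
    exact div_pos (mul_pos h1 h2) h3
  rw [hImInt] at hIm
  simp_rw [hptw] at hIm
  rw [intervalIntegral.integral_const_mul] at hIm
  rcases mul_eq_zero.mp hIm with h' | h'
  · have : z.re * z.im ≠ 0 := mul_ne_zero hre him
    apply this
    linarith [h']
  · exact hpos.ne' h'
end

section
/- Let c > 1 and let g : ℝ → ℝ be a C^∞ function with g(y) > 0 for y ∈ (1,c), g(−y) = g(y) for all y, and g(y) = 0 for y outside (−c,−1) ∪ (1,c). Define, for u ∈ ℝ, C(iu) = 1 − ∫₁ᶜ 2y·g(y)²/(u² + y²) dy (this is the function C(z) = 1 + ∫₁ᶜ 2y g(y)²/(z² − y²) dy evaluated on the imaginary axis, and it is real). Then: (i) u ↦ C(iu) is strictly increasing in u², i.e. C(iu₁) < C(iu₂) whenever 0 ≤ u₁ < u₂; (ii) C(iu) → 1 as u → ∞; (iii) if C(0) < 0 there exists exactly one u₀ > 0 with C(iu₀) = 0; (iv) if C(0) > 0 then C(iu) > 0 for all u ∈ ℝ. -/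
open MeasureTheory intervalIntegral Filter

/-- With `g` smooth, even, positive on `(1,c)` and vanishing outside
`(-c,-1) ∪ (1,c)`, let `Ci u = C(iu) = 1 - ∫₁ᶜ 2y g(y)²/(u²+y²) dy`. Then
(i) `Ci` is strictly increasing in `u²`; (ii) `Ci u → 1` as `u → ∞`;
(iii) if `Ci 0 < 0` there is exactly one `u₀ > 0` with `Ci u₀ = 0`;
(iv) if `Ci 0 > 0` then `Ci u > 0` for all `u`. -/
theorem C_on_imaginary_axis
    (c : ℝ) (hc : 1 < c) (g : ℝ → ℝ)
    (hg_smooth : ContDiff ℝ (⊤ : ℕ∞) g)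
    (hg_pos : ∀ y ∈ Set.Ioo (1 : ℝ) c, 0 < g y)
    (hg_even : ∀ y, g (-y) = g y)
    (hg_supp : ∀ y, y ∉ Set.Ioo (-c) (-1) ∪ Set.Ioo 1 c → g y = 0)
    (Ci : ℝ → ℝ)
    (hCi : ∀ u, Ci u = 1 - ∫ y in (1 : ℝ)..c, 2 * y * g y ^ 2 / (u ^ 2 + y ^ 2)) :
    (∀ u₁ u₂ : ℝ, 0 ≤ u₁ → u₁ < u₂ → Ci u₁ < Ci u₂) ∧
    Tendsto Ci atTop (nhds 1) ∧
    (Ci 0 < 0 → ∃! u₀ : ℝ, 0 < u₀ ∧ Ci u₀ = 0) ∧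
    (0 < Ci 0 → ∀ u : ℝ, 0 < Ci u) := by
  have hgc : Continuous g := hg_smooth.continuous
  -- denominators on [1,c] are positive
  have hden : ∀ (u y : ℝ), 1 ≤ y → 0 < u ^ 2 + y ^ 2 := by
    intro u y hy
    have : (0:ℝ) < y ^ 2 := by nlinarith
    positivity
  -- continuity in y of the integrand, on [1,c]
  have hcontOn : ∀ u : ℝ, ContinuousOn (fun y => 2 * y * g y ^ 2 / (u ^ 2 + y ^ 2))
      (Set.Icc 1 c) := by
    intro u
    apply ContinuousOn.div
    · fun_prop
    · fun_prop
    · intro y hy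
      exact (hden u y hy.1).ne'
  -- part (i)
  have hmono : ∀ u₁ u₂ : ℝ, 0 ≤ u₁ → u₁ < u₂ → Ci u₁ < Ci u₂ := by
    intro u₁ u₂ hu₁ h12
    rw [hCi u₁, hCi u₂]
    have key : (∫ y in (1:ℝ)..c, 2 * y * g y ^ 2 / (u₂ ^ 2 + y ^ 2)) <
        ∫ y in (1:ℝ)..c, 2 * y * g y ^ 2 / (u₁ ^ 2 + y ^ 2) := by
      apply intervalIntegral.integral_lt_integral_of_continuousOn_of_le_of_exists_lt hc
        (hcontOn u₂) (hcontOn u₁)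
      · intro y hy
        have hy1 : (1:ℝ) ≤ y := hy.1.le
        have h1 := hden u₁ y hy1
        have hnum : 0 ≤ 2 * y * g y ^ 2 := by nlinarith [sq_nonneg (g y)]
        exact div_le_div_of_nonneg_left hnum h1 (by nlinarith)
      · refine ⟨(1 + c) / 2, ⟨by linarith, by linarith⟩, ?_⟩
        set y₀ := (1 + c) / 2 with hy₀
        have hy₀mem : y₀ ∈ Set.Ioo (1:ℝ) c := ⟨by rw [hy₀]; linarith, by rw [hy₀]; linarith⟩
        have hy1 : (1:ℝ) ≤ y₀ := hy₀mem.1.le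
        have h1 := hden u₁ y₀ hy1
        have hgpos := hg_pos y₀ hy₀mem
        have hnum : 0 < 2 * y₀ * g y₀ ^ 2 := by nlinarith
        exact div_lt_div_of_pos_left hnum h1 (by nlinarith)
    linarith
  -- part (ii): tendsto 1 at top
  have htend : Tendsto Ci atTop (nhds 1) := by
    have hA : IntervalIntegrable (fun y => 2 * y * g y ^ 2) volume 1 c := by
      apply Continuous.intervalIntegrable; fun_prop
    set A : ℝ := ∫ y in (1:ℝ)..c, 2 * y * g y ^ 2 with hAdef
    have hF0 : Tendsto (fun u => ∫ y in (1:ℝ)..c, 2 * y * g y ^ 2 / (u ^ 2 + y ^ 2))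
        atTop (nhds 0) := by
      have hub : ∀ u : ℝ, (∫ y in (1:ℝ)..c, 2 * y * g y ^ 2 / (u ^ 2 + y ^ 2))
          ≤ A / (u ^ 2 + 1) := by
        intro u
        have hd1 : (0:ℝ) < u ^ 2 + 1 := by positivity
        rw [hAdef, ← intervalIntegral.integral_div]
        apply intervalIntegral.integral_mono_on hc.le
        · exact ((hcontOn u).intervalIntegrable_of_Icc hc.le)
        · exact hA.div_const _
        · intro y hy
          have hy1 : (1:ℝ) ≤ y := hy.1
          have hnum : 0 ≤ 2 * y * g y ^ 2 := by nlinarith [sq_nonneg (g y)]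
          exact div_le_div_of_nonneg_left hnum hd1 (by nlinarith)
      have hlb : ∀ u : ℝ, 0 ≤ ∫ y in (1:ℝ)..c, 2 * y * g y ^ 2 / (u ^ 2 + y ^ 2) := by
        intro u
        apply intervalIntegral.integral_nonneg hc.le
        intro y hy
        have hy1 : (1:ℝ) ≤ y := hy.1
        have := hden u y hy1
        have hnum : 0 ≤ 2 * y * g y ^ 2 := by nlinarith [sq_nonneg (g y)]
        positivity
      have htop : Tendsto (fun u : ℝ => u ^ 2 + 1) atTop atTop :=
        tendsto_atTop_add_const_right _ 1 (tendsto_pow_atTop two_ne_zero)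
      have hAb : Tendsto (fun u : ℝ => A / (u ^ 2 + 1)) atTop (nhds 0) :=
        Tendsto.div_atTop tendsto_const_nhds htop
      exact tendsto_of_tendsto_of_tendsto_of_le_of_le tendsto_const_nhds hAb hlb hub
    have h1 : Tendsto (fun u => (1:ℝ) -
        ∫ y in (1:ℝ)..c, 2 * y * g y ^ 2 / (u ^ 2 + y ^ 2)) atTop (nhds (1 - 0)) :=
      tendsto_const_nhds.sub hF0
    rw [sub_zero] at h1
    exact h1.congr fun u => (hCi u).symm
  -- continuity of Ci, via a globally continuous modification of the integrand
  have hCicont : Continuous Ci := by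
    have heq : ∀ u, Ci u = 1 - ∫ y in (1:ℝ)..c,
        2 * y * g y ^ 2 / (u ^ 2 + (max y 1) ^ 2) := by
      intro u
      rw [hCi u]
      congr 1
      apply intervalIntegral.integral_congr
      intro y hy
      have hy1 : (1:ℝ) ≤ y := by
        rcases hy with ⟨h1, h2⟩
        simpa [min_eq_left hc.le] using h1
      simp [max_eq_left hy1]
    rw [funext heq]
    apply continuous_const.sub
    apply intervalIntegral.continuous_parametric_intervalIntegral_of_continuous'
    have hden' : ∀ p : ℝ × ℝ, p.1 ^ 2 + (max p.2 1) ^ 2 ≠ 0 := by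
      intro p
      have h1 : (1:ℝ) ≤ max p.2 1 := le_max_right _ _
      have : (0:ℝ) < p.1 ^ 2 + (max p.2 1) ^ 2 := by nlinarith [sq_nonneg p.1]
      exact this.ne'
    exact Continuous.div (by fun_prop) (by fun_prop) hden'
  refine ⟨hmono, htend, ?_, ?_⟩
  -- part (iii)
  · intro h0
    obtain ⟨U, hU0, hUpos⟩ : ∃ U : ℝ, 0 < U ∧ 0 < Ci U := by
      have hev : ∀ᶠ u in atTop, 0 < Ci u := htend.eventually (eventually_gt_nhds one_pos)
      obtain ⟨U, hU⟩ := (hev.and (eventually_gt_atTop 0)).exists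
      exact ⟨U, hU.2, hU.1⟩
    obtain ⟨u₀, hu₀mem, hu₀⟩ : ∃ u₀ ∈ Set.Icc (0:ℝ) U, Ci u₀ = 0 := by
      have := intermediate_value_Icc hU0.le hCicont.continuousOn
      exact this ⟨h0.le, hUpos.le⟩
    have hu₀pos : 0 < u₀ := by
      rcases lt_or_eq_of_le hu₀mem.1 with h | h
      · exact h
      · exfalso; rw [← h] at hu₀; linarith
    refine ⟨u₀, ⟨hu₀pos, hu₀⟩, ?_⟩
    rintro u₁ ⟨hu₁pos, hu₁⟩
    by_contra hne
    rcases lt_or_gt_of_ne hne with h | h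
    · have := hmono u₁ u₀ hu₁pos.le h; linarith
    · have := hmono u₀ u₁ hu₀pos.le h; linarith
  -- part (iv)
  · intro h0 u
    have habs : Ci u = Ci |u| := by rw [hCi, hCi, sq_abs]
    rcases eq_or_ne u 0 with h | h
    · rw [h]; exact h0
    · have : 0 < |u| := abs_pos.mpr h
      have := hmono 0 |u| le_rfl this
      linarith [habs ▸ this]
end

section
/- For every ω ∈ ℝ and all test functions φ₁, φ₂ on ℂ: (∫_ℂ φ₁(z₁)/(z₁ − ω) d²z₁)·(∫_ℂ φ₂(z₂)/(z₂ − ω) d²z₂) = ∫_ℂ (φ₁(z₁)/(z₁ − ω))·(∫_ℂ φ₂(z₂)/(z₂ − z₁) d²z₂) d²z₁ − ∫_ℂ (φ₂(z₂)/(z₂ − ω))·(∫_ℂ φ₁(z₁)/(z₂ − z₁) d²z₁) d²z₂. (This is the distribution resolvent equation for the resolvent distribution R(z) = 1/(z − Ω) of the multiplication operator, evaluated at the point ω of the spectrum; all integrals converge absolutely since 1/z is locally integrable on ℂ.) -/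
open MeasureTheory Real

/-- `‖z‖⁻¹ e^{-‖z‖}` is integrable on `ℂ`. -/
lemma base_integrable17 : Integrable (fun z : ℂ => ‖z‖⁻¹ * rexp (-‖z‖)) := by
  by_contra h
  have h0 : ∫ z : ℂ, ‖z‖⁻¹ * rexp (-‖z‖) = 0 := integral_undef h
  have h1 := Complex.integral_rpow_mul_exp_neg_rpow (p := 1) (q := -1) le_rfl (by norm_num)
  simp only [rpow_one, rpow_neg_one] at h1
  rw [h0] at h1
  have h2 : (0:ℝ) < 2 * π / 1 * Real.Gamma ((-1 + 2)/1) := by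
    have := Real.pi_pos
    norm_num [Real.Gamma_one]
    linarith
  rw [← h1] at h2
  exact lt_irrefl _ h2

lemma key_ineq17 (r : ℝ) (hr : 0 ≤ r) : r⁻¹ ≤ rexp 1 * (r⁻¹ * rexp (-r)) + 1 := by
  rcases eq_or_lt_of_le hr with h | h
  · simp [← h]
  rcases le_or_gt r 1 with h1 | h1
  · have he : rexp (-1) ≤ rexp (-r) := exp_le_exp.mpr (by linarith)
    have hi : (0:ℝ) < r⁻¹ := inv_pos.mpr h
    have h2 : r⁻¹ * (rexp 1 * rexp (-1)) ≤ r⁻¹ * (rexp 1 * rexp (-r)) := by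
      apply mul_le_mul_of_nonneg_left _ hi.le
      exact mul_le_mul_of_nonneg_left he (exp_pos 1).le
    rw [← Real.exp_add] at h2
    simp at h2
    nlinarith [exp_pos (-r), exp_pos 1]
  · have h2 : r⁻¹ ≤ 1 := by rw [inv_le_one_iff₀]; right; exact h1.le
    have h3 : 0 ≤ rexp 1 * (r⁻¹ * rexp (-r)) := by positivity
    linarith

/-- For a continuous compactly supported `φ` and any `a`, the function `φ z / (z - a)`
is dominated by an integrable indicator function. -/
lemma dominator17 (φ : ℂ → ℂ) (hc : Continuous φ) (hs : HasCompactSupport φ) (a : ℂ)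
    {M : ℝ} (hM : ∀ x, ‖φ x‖ ≤ M) :
    Integrable ((tsupport φ).indicator
      (fun z => M * (rexp 1 * (‖z - a‖⁻¹ * rexp (-‖z - a‖)) + 1))) volume ∧
    ∀ z : ℂ, ‖φ z / (z - a)‖ ≤ (tsupport φ).indicator
      (fun z => M * (rexp 1 * (‖z - a‖⁻¹ * rexp (-‖z - a‖)) + 1)) z := by
  have hK : IsCompact (tsupport φ) := hs
  have hKm : MeasurableSet (tsupport φ) := (isClosed_tsupport φ).measurableSet
  have hM0 : 0 ≤ M := le_trans (norm_nonneg _) (hM 0)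
  have hint : Integrable (fun z : ℂ => ‖z - a‖⁻¹ * rexp (-‖z - a‖)) volume :=
    base_integrable17.comp_sub_right a
  constructor
  · apply IntegrableOn.integrable_indicator _ hKm
    exact (((hint.integrableOn.const_mul (rexp 1)).add
      ((integrableOn_const_iff).mpr (Or.inr hK.measure_lt_top))).const_mul M)
  · intro z
    by_cases hz : z ∈ tsupport φ
    · rw [Set.indicator_of_mem hz]
      rw [norm_div]
      rw [div_eq_mul_inv]
      calc ‖φ z‖ * ‖z - a‖⁻¹ ≤ M * ‖z - a‖⁻¹ :=
            mul_le_mul_of_nonneg_right (hM z) (inv_nonneg.mpr (norm_nonneg _))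
        _ ≤ M * (rexp 1 * (‖z - a‖⁻¹ * rexp (-‖z - a‖)) + 1) :=
            mul_le_mul_of_nonneg_left (key_ineq17 _ (norm_nonneg _)) hM0
    · rw [Set.indicator_of_notMem hz, image_eq_zero_of_notMem_tsupport hz]
      simp

/-- Integrability of `φ z / (z - a)`. -/
lemma div_integrable17 (φ : ℂ → ℂ) (hc : Continuous φ) (hs : HasCompactSupport φ) (a : ℂ) :
    Integrable (fun z : ℂ => φ z / (z - a)) volume := by
  obtain ⟨M, hM⟩ := hs.exists_bound_of_continuous hc
  obtain ⟨hdom, hbound⟩ := dominator17 φ hc hs a hM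
  apply hdom.mono' _ (ae_of_all _ hbound)
  apply Measurable.aestronglyMeasurable
  fun_prop

/-- Uniform (in `a`) bound on `∫ ‖φ z / (z - a)‖`. -/
lemma div_norm_bound17 (φ : ℂ → ℂ) (hc : Continuous φ) (hs : HasCompactSupport φ) :
    ∃ C : ℝ, ∀ a : ℂ, (∫ z : ℂ, ‖φ z / (z - a)‖) ≤ C := by
  obtain ⟨M, hM⟩ := hs.exists_bound_of_continuous hc
  have hM0 : 0 ≤ M := le_trans (norm_nonneg _) (hM 0)
  set I₀ : ℝ := ∫ z : ℂ, ‖z‖⁻¹ * rexp (-‖z‖) with hI₀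
  refine ⟨M * (rexp 1 * I₀ + (volume (tsupport φ)).toReal), fun a => ?_⟩
  obtain ⟨hdom, hbound⟩ := dominator17 φ hc hs a hM
  have hK : IsCompact (tsupport φ) := hs
  have hKm : MeasurableSet (tsupport φ) := (isClosed_tsupport φ).measurableSet
  have hint : Integrable (fun z : ℂ => ‖z - a‖⁻¹ * rexp (-‖z - a‖)) volume :=
    base_integrable17.comp_sub_right a
  have h1 : (∫ z : ℂ, ‖φ z / (z - a)‖) ≤ ∫ z : ℂ, (tsupport φ).indicator
      (fun z => M * (rexp 1 * (‖z - a‖⁻¹ * rexp (-‖z - a‖)) + 1)) z := by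
    apply integral_mono (div_integrable17 φ hc hs a).norm hdom hbound
  refine h1.trans ?_
  rw [integral_indicator hKm]
  have h2 : ∫ z in tsupport φ, M * (rexp 1 * (‖z - a‖⁻¹ * rexp (-‖z - a‖)) + 1) =
      M * (rexp 1 * (∫ z in tsupport φ, ‖z - a‖⁻¹ * rexp (-‖z - a‖))
        + (volume (tsupport φ)).toReal) := by
    rw [MeasureTheory.integral_const_mul]
    congr 1
    rw [integral_add ((hint.integrableOn).const_mul _)
      ((integrableOn_const_iff).mpr (Or.inr hK.measure_lt_top))]
    rw [MeasureTheory.integral_const_mul, integral_const]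
    simp [Measure.restrict_apply_univ, Measure.real]
  rw [h2]
  apply mul_le_mul_of_nonneg_left _ hM0
  have h3 : (∫ z in tsupport φ, ‖z - a‖⁻¹ * rexp (-‖z - a‖)) ≤ I₀ := by
    have h4 : (∫ z : ℂ, ‖z - a‖⁻¹ * rexp (-‖z - a‖)) = I₀ := by
      rw [hI₀]
      exact integral_sub_right_eq_self (fun z : ℂ => ‖z‖⁻¹ * rexp (-‖z‖)) a
    rw [← h4]
    apply setIntegral_le_integral hint
    apply ae_of_all
    intro z
    positivity
  gcongr


/-- The distribution resolvent equation for the resolvent distribution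
`R(z) = 1/(z-Ω)` of the multiplication operator, evaluated at a spectral point `ω ∈ ℝ`:
for all test functions `φ₁, φ₂` on `ℂ`,
`(∫ φ₁(z₁)/(z₁-ω)) (∫ φ₂(z₂)/(z₂-ω)) = ∫ φ₁(z₁)/(z₁-ω) (∫ φ₂(z₂)/(z₂-z₁)) dz₁
  - ∫ φ₂(z₂)/(z₂-ω) (∫ φ₁(z₁)/(z₂-z₁)) dz₂`. -/
theorem distribution_resolvent_equation_multiplication (ω : ℝ) (φ₁ φ₂ : ℂ → ℂ)
    (hφ₁ : ContDiff ℝ (⊤ : ℕ∞) φ₁) (hsupp₁ : HasCompactSupport φ₁)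
    (hφ₂ : ContDiff ℝ (⊤ : ℕ∞) φ₂) (hsupp₂ : HasCompactSupport φ₂) :
    (∫ z₁ : ℂ, φ₁ z₁ / (z₁ - (ω : ℂ))) * (∫ z₂ : ℂ, φ₂ z₂ / (z₂ - (ω : ℂ))) =
      (∫ z₁ : ℂ, (φ₁ z₁ / (z₁ - (ω : ℂ))) * ∫ z₂ : ℂ, φ₂ z₂ / (z₂ - z₁)) -
      (∫ z₂ : ℂ, (φ₂ z₂ / (z₂ - (ω : ℂ))) * ∫ z₁ : ℂ, φ₁ z₁ / (z₂ - z₁)) := by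
  set a : ℂ := (ω : ℂ) with ha
  have hc₁ : Continuous φ₁ := hφ₁.continuous
  have hc₂ : Continuous φ₂ := hφ₂.continuous
  have hf₁ : Integrable (fun z : ℂ => φ₁ z / (z - a)) volume := div_integrable17 φ₁ hc₁ hsupp₁ a
  have hf₂ : Integrable (fun z : ℂ => φ₂ z / (z - a)) volume := div_integrable17 φ₂ hc₂ hsupp₂ a
  obtain ⟨C₁, hC₁⟩ := div_norm_bound17 φ₁ hc₁ hsupp₁
  obtain ⟨C₂, hC₂⟩ := div_norm_bound17 φ₂ hc₂ hsupp₂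
  set G : ℂ × ℂ → ℂ := fun p => (φ₁ p.1 / (p.1 - a)) * (φ₂ p.2 / (p.2 - p.1)) with hGdef
  set G₂ : ℂ × ℂ → ℂ := fun q => (φ₂ q.1 / (q.1 - a)) * (φ₁ q.2 / (q.1 - q.2)) with hG₂def
  have hGm : AEStronglyMeasurable G (volume.prod volume) := by
    apply Measurable.aestronglyMeasurable
    fun_prop
  have hG₂m : AEStronglyMeasurable G₂ (volume.prod volume) := by
    apply Measurable.aestronglyMeasurable
    fun_prop
  -- integrability of G
  have hG : Integrable G (volume.prod volume) := by
    rw [integrable_prod_iff hGm]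
    constructor
    · apply ae_of_all
      intro x
      simp only [hGdef]
      exact (div_integrable17 φ₂ hc₂ hsupp₂ x).const_mul _
    · apply Integrable.mono' (hf₁.norm.const_mul C₂) hGm.norm.integral_prod_right'
      apply ae_of_all
      intro x
      have h0 : 0 ≤ ∫ y : ℂ, ‖G (x, y)‖ := integral_nonneg fun y => norm_nonneg _
      rw [Real.norm_of_nonneg h0]
      have h1 : ∀ y : ℂ, ‖G (x, y)‖ = ‖φ₁ x / (x - a)‖ * ‖φ₂ y / (y - x)‖ := fun y => by
        simp [hGdef, norm_mul]
      calc (∫ y : ℂ, ‖G (x, y)‖) = ∫ y : ℂ, ‖φ₁ x / (x - a)‖ * ‖φ₂ y / (y - x)‖ := by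
            simp_rw [h1]
        _ = ‖φ₁ x / (x - a)‖ * ∫ y : ℂ, ‖φ₂ y / (y - x)‖ := by
            rw [MeasureTheory.integral_const_mul]
        _ ≤ ‖φ₁ x / (x - a)‖ * C₂ :=
            mul_le_mul_of_nonneg_left (hC₂ x) (norm_nonneg _)
        _ = C₂ * ‖φ₁ x / (x - a)‖ := mul_comm _ _
  -- integrability of G₂
  have hG₂ : Integrable G₂ (volume.prod volume) := by
    rw [integrable_prod_iff hG₂m]
    constructor
    · apply ae_of_all
      intro x
      have : (fun y : ℂ => (φ₂ x / (x - a)) * (φ₁ y / (x - y))) =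
          fun y : ℂ => (φ₂ x / (x - a)) * -(φ₁ y / (y - x)) := by
        funext y
        rw [← neg_sub y x, div_neg]
      simp only [hG₂def, this]
      exact ((div_integrable17 φ₁ hc₁ hsupp₁ x).neg.const_mul _)
    · apply Integrable.mono' (hf₂.norm.const_mul C₁) hG₂m.norm.integral_prod_right'
      apply ae_of_all
      intro x
      have h0 : 0 ≤ ∫ y : ℂ, ‖G₂ (x, y)‖ := integral_nonneg fun y => norm_nonneg _
      rw [Real.norm_of_nonneg h0]
      have h1 : ∀ y : ℂ, ‖G₂ (x, y)‖ = ‖φ₂ x / (x - a)‖ * ‖φ₁ y / (y - x)‖ := fun y => by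
        rw [hG₂def]
        simp only [norm_mul]
        congr 1
        rw [← neg_sub y x, div_neg, norm_neg]
      calc (∫ y : ℂ, ‖G₂ (x, y)‖) = ∫ y : ℂ, ‖φ₂ x / (x - a)‖ * ‖φ₁ y / (y - x)‖ := by
            simp_rw [h1]
        _ = ‖φ₂ x / (x - a)‖ * ∫ y : ℂ, ‖φ₁ y / (y - x)‖ := by
            rw [MeasureTheory.integral_const_mul]
        _ ≤ ‖φ₂ x / (x - a)‖ * C₁ :=
            mul_le_mul_of_nonneg_left (hC₁ x) (norm_nonneg _)
        _ = C₁ * ‖φ₂ x / (x - a)‖ := mul_comm _ _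
  have hH : Integrable (fun p : ℂ × ℂ => G₂ p.swap) (volume.prod volume) := hG₂.swap
  -- rewrite sides as product integrals
  have step1 : (∫ z₁ : ℂ, φ₁ z₁ / (z₁ - a)) * (∫ z₂ : ℂ, φ₂ z₂ / (z₂ - a)) =
      ∫ p : ℂ × ℂ, (φ₁ p.1 / (p.1 - a)) * (φ₂ p.2 / (p.2 - a)) ∂(volume.prod volume) :=
    (integral_prod_mul _ _).symm
  have step2 : (∫ z₁ : ℂ, (φ₁ z₁ / (z₁ - a)) * ∫ z₂ : ℂ, φ₂ z₂ / (z₂ - z₁)) =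
      ∫ p : ℂ × ℂ, G p ∂(volume.prod volume) := by
    simp_rw [← MeasureTheory.integral_const_mul]
    exact integral_integral hG
  have step3 : (∫ z₂ : ℂ, (φ₂ z₂ / (z₂ - a)) * ∫ z₁ : ℂ, φ₁ z₁ / (z₂ - z₁)) =
      ∫ q : ℂ × ℂ, G₂ q ∂(volume.prod volume) := by
    simp_rw [← MeasureTheory.integral_const_mul]
    exact integral_integral hG₂
  have step4 : (∫ q : ℂ × ℂ, G₂ q ∂(volume.prod volume)) =
      ∫ p : ℂ × ℂ, G₂ p.swap ∂(volume.prod volume) :=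
    (integral_prod_swap G₂).symm
  rw [step1, step2, step3, step4]
  -- a.e. statements about avoiding the singular sets
  have h2 : ∀ᵐ p : ℂ × ℂ ∂(volume.prod volume), p.1 ≠ a := by
    rw [ae_iff]
    have hset : {p : ℂ × ℂ | ¬ p.1 ≠ a} = ({a} : Set ℂ) ×ˢ (Set.univ : Set ℂ) := by
      ext ⟨x, y⟩
      simp only [Set.mem_setOf_eq, Set.mem_prod, Set.mem_singleton_iff, Set.mem_univ,
        and_true, not_not]
    rw [hset, Measure.prod_prod, measure_singleton, zero_mul]
  have h3 : ∀ᵐ p : ℂ × ℂ ∂(volume.prod volume), p.2 ≠ a := by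
    rw [ae_iff]
    have hset : {p : ℂ × ℂ | ¬ p.2 ≠ a} = (Set.univ : Set ℂ) ×ˢ ({a} : Set ℂ) := by
      ext ⟨x, y⟩
      simp only [Set.mem_setOf_eq, Set.mem_prod, Set.mem_singleton_iff, Set.mem_univ,
        true_and, not_not]
    rw [hset, Measure.prod_prod, measure_singleton, mul_zero]
  have h1 : ∀ᵐ p : ℂ × ℂ ∂(volume.prod volume), p.1 ≠ p.2 := by
    rw [ae_iff]
    have hms : MeasurableSet {p : ℂ × ℂ | ¬ p.1 ≠ p.2} := by
      simp only [not_ne_iff]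
      exact measurableSet_eq_fun measurable_fst measurable_snd
    rw [Measure.prod_apply hms]
    have hslice : ∀ x : ℂ, volume (Prod.mk x ⁻¹' {p : ℂ × ℂ | ¬ p.1 ≠ p.2}) = 0 := by
      intro x
      have : Prod.mk x ⁻¹' {p : ℂ × ℂ | ¬ p.1 ≠ p.2} = ({x} : Set ℂ) := by
        ext y; simp [eq_comm]
      rw [this, measure_singleton]
    simp_rw [hslice]
    simp
  -- pointwise resolvent identity
  have hae : (fun p : ℂ × ℂ => (φ₁ p.1 / (p.1 - a)) * (φ₂ p.2 / (p.2 - a))) =ᵐ[volume.prod volume]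
      fun p => G p - G₂ p.swap := by
    filter_upwards [h1, h2, h3] with p hp1 hp2 hp3
    simp only [hGdef, hG₂def, Prod.fst_swap, Prod.snd_swap]
    have d1 : p.1 - a ≠ 0 := sub_ne_zero.mpr hp2
    have d2 : p.2 - a ≠ 0 := sub_ne_zero.mpr hp3
    have d3 : p.2 - p.1 ≠ 0 := sub_ne_zero.mpr (Ne.symm hp1)
    field_simp
    ring
  rw [integral_congr_ae hae]
  exact integral_sub hG hH
end
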